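/- arXiv:2509.24409 — 7 statements merged into one kernel-verified Lean document; each statement's English description precedes it below -/
import Mathlib

section
/- Let U be an 𝔽_q-subspace of 𝕍(k,q^m) with dim_{𝔽_q}(U) = n and ⟨U⟩_{𝔽_{q^m}} = 𝕍(k,q^m). Then the maximum defects are non-decreasing: 0 = ε_U(0) ≤ ε_U(1) ≤ ε_U(2) ≤ ⋯ ≤ ε_U(k) = n − k. In particular, if ε_U(j) = 0 for some j ∈ {1,…,k}, then ε_U(i) = 0 for each i ∈ {1,…,j}. -/
/-- The weight of the `𝔽_{q^m}`-subspace `T` with respect to the `𝔽_q`-subspace `U`: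
`w_U(T) = dim_{𝔽_q}(U ∩ T)`. -/
noncomputable def wt {K L V : Type*} [Field K] [Field L] [Algebra K L]
    [AddCommGroup V] [Module K V] [Module L V] [IsScalarTower K L V]
    (U : Submodule K V) (T : Submodule L V) : ℕ :=
  Module.finrank K ↥(U ⊓ T.restrictScalars K)

/-- The defect of `T` with respect to `U`: `ε_U(T) = w_U(T) − dim_{𝔽_{q^m}}(T)`. -/
noncomputable def defect {K L V : Type*} [Field K] [Field L] [Algebra K L]
    [AddCommGroup V] [Module K V] [Module L V] [IsScalarTower K L V]
    (U : Submodule K V) (T : Submodule L V) : ℤ :=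
  (wt U T : ℤ) - Module.finrank L ↥T

/-- `ε_U(r)`: the maximum defect of `r`-dimensional `𝔽_{q^m}`-subspaces w.r.t. `U`. -/
noncomputable def maxDefect {K V : Type*} (L : Type*) [Field K] [Field L] [Algebra K L]
    [AddCommGroup V] [Module K V] [Module L V] [IsScalarTower K L V]
    (U : Submodule K V) (r : ℕ) : ℤ :=
  sSup {e : ℤ | ∃ T : Submodule L V, Module.finrank L ↥T = r ∧ e = defect U T}

section Aux

set_option linter.unusedSectionVars false

variable {K L V : Type*} [Field K] [Field L] [Algebra K L]
    [AddCommGroup V] [Module K V] [Module L V] [IsScalarTower K L V]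
    [FiniteDimensional K V] [FiniteDimensional L V]

open Module Submodule

lemma wt_le (U : Submodule K V) (T : Submodule L V) : wt U T ≤ finrank K U :=
  Submodule.finrank_mono inf_le_left

lemma step (U : Submodule K V) (hUspan : Submodule.span L (U : Set V) = ⊤)
    {T : Submodule L V} (hT : finrank L T < finrank L V) :
    ∃ T' : Submodule L V, finrank L T' = finrank L T + 1 ∧ defect U T ≤ defect U T' := by
  -- find u ∈ U \ T
  have hTne : ¬ ((U : Set V) ⊆ T) := by
    intro h
    have hle : Submodule.span L (U : Set V) ≤ T := Submodule.span_le.mpr h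
    rw [hUspan, top_le_iff] at hle
    rw [hle, finrank_top] at hT
    exact lt_irrefl _ hT
  obtain ⟨u, huU, huT⟩ := Set.not_subset.mp hTne
  have hu0 : u ≠ 0 := fun h => huT (h ▸ T.zero_mem)
  have hdisjL : Disjoint T (Submodule.span L {u}) :=
    (Submodule.disjoint_span_singleton' hu0).mpr huT
  have hfr : finrank L ↥(T ⊔ Submodule.span L {u}) = finrank L T + 1 := by
    have h := Submodule.finrank_sup_add_finrank_inf_eq T (Submodule.span L {u})
    rw [hdisjL.eq_bot, finrank_bot, finrank_span_singleton hu0, add_zero] at h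
    omega
  refine ⟨T ⊔ Submodule.span L {u}, hfr, ?_⟩
  have huT' : u ∈ T ⊔ Submodule.span L {u} :=
    Submodule.mem_sup_right (Submodule.subset_span rfl)
  have hWle : (U ⊓ T.restrictScalars K) ⊔ Submodule.span K {u}
      ≤ U ⊓ (T ⊔ Submodule.span L {u}).restrictScalars K := by
    refine sup_le (inf_le_inf le_rfl ?_) ?_
    · exact fun x hx => Submodule.mem_sup_left hx
    · rw [Submodule.span_le, Set.singleton_subset_iff]
      exact ⟨huU, huT'⟩
  have huW : u ∉ U ⊓ T.restrictScalars K := fun h => huT h.2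
  have hdisj : Disjoint (U ⊓ T.restrictScalars K) (Submodule.span K {u}) :=
    (Submodule.disjoint_span_singleton' hu0).mpr huW
  have hsum := Submodule.finrank_sup_add_finrank_inf_eq
    (U ⊓ T.restrictScalars K) (Submodule.span K {u})
  rw [hdisj.eq_bot, finrank_bot, finrank_span_singleton hu0, add_zero] at hsum
  have hmono' := Submodule.finrank_mono hWle
  have hwt : wt U T + 1 ≤ wt U (T ⊔ Submodule.span L {u}) := by
    unfold wt
    omega
  unfold defect
  rw [hfr]
  push_cast
  omega

lemma bddAbove_defects (U : Submodule K V) (r : ℕ) :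
    BddAbove {e : ℤ | ∃ T : Submodule L V, Module.finrank L ↥T = r ∧ e = defect U T} := by
  refine ⟨(Module.finrank K U : ℤ), fun e he => ?_⟩
  obtain ⟨T, hT, rfl⟩ := he
  have := wt_le U T
  unfold defect
  omega

lemma nonempty_defects (U : Submodule K V) (hUspan : Submodule.span L (U : Set V) = ⊤)
    (r : ℕ) (hr : r ≤ finrank L V) :
    {e : ℤ | ∃ T : Submodule L V, Module.finrank L ↥T = r ∧ e = defect U T}.Nonempty := by
  induction r with
  | zero => exact ⟨defect U ⊥, ⊥, by simp [finrank_bot], rfl⟩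
  | succ r ih =>
    obtain ⟨e, T, hT, rfl⟩ := ih (Nat.le_of_succ_le hr)
    obtain ⟨T', hT', _⟩ := step U hUspan (by omega : finrank L T < finrank L V)
    exact ⟨defect U T', T', by omega, rfl⟩

end Aux


/-- Property 1.6: monotonicity of the maximum defects. -/
theorem statement0 {K L V : Type*} [Field K] [Field L] [Algebra K L]
    [Fintype K] [Fintype L]
    [AddCommGroup V] [Module K V] [Module L V] [IsScalarTower K L V]
    [FiniteDimensional L V]
    (m k n : ℕ) (hm : 0 < m) (hk : 0 < k) (hn : 0 < n)
    (hmL : Module.finrank K L = m) (hkV : Module.finrank L V = k)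
    (U : Submodule K V) (hUn : Module.finrank K ↥U = n)
    (hUspan : Submodule.span L (U : Set V) = ⊤) :
    maxDefect L U 0 = 0 ∧
    (∀ i j : ℕ, i ≤ j → j ≤ k → maxDefect L U i ≤ maxDefect L U j) ∧
    maxDefect L U k = (n : ℤ) - (k : ℤ) ∧
    (∀ j : ℕ, 1 ≤ j → j ≤ k → maxDefect L U j = 0 →
      ∀ i : ℕ, 1 ≤ i → i ≤ j → maxDefect L U i = 0) := by
  haveI : FiniteDimensional K V := Module.Finite.trans L V
  have hzero : maxDefect L U 0 = 0 := by
    have hset : {e : ℤ | ∃ T : Submodule L V, Module.finrank L ↥T = 0 ∧ e = defect U T}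
        = {0} := by
      ext e
      simp only [Set.mem_setOf_eq, Set.mem_singleton_iff]
      constructor
      · rintro ⟨T, hT, rfl⟩
        have : T = ⊥ := Submodule.finrank_eq_zero.mp hT
        subst this
        have hb : U ⊓ (⊥ : Submodule L V).restrictScalars K = (⊥ : Submodule K V) := by
          simp
        unfold defect wt
        rw [hb, finrank_bot, finrank_bot]
        simp
      · rintro rfl
        have hb : U ⊓ (⊥ : Submodule L V).restrictScalars K = (⊥ : Submodule K V) := by
          simp
        refine ⟨⊥, by simp [finrank_bot], ?_⟩
        unfold defect wt
        rw [hb, finrank_bot, finrank_bot]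
        simp
    rw [maxDefect, hset, csSup_singleton]
  have hmono : ∀ i j : ℕ, i ≤ j → j ≤ k → maxDefect L U i ≤ maxDefect L U j := by
    intro i j hij hjk
    induction j, hij using Nat.le_induction with
    | base => exact le_refl _
    | succ j hij ih =>
      refine le_trans (ih (by omega)) ?_
      rw [maxDefect, maxDefect]
      refine csSup_le (nonempty_defects U hUspan j (by omega)) ?_
      rintro e ⟨T, hT, rfl⟩
      obtain ⟨T', hT', hle⟩ := step U hUspan (by omega : Module.finrank L T < Module.finrank L V)
      exact le_trans hle (le_csSup (bddAbove_defects U (j+1)) ⟨T', by omega, rfl⟩)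
  have htop : maxDefect L U k = (n : ℤ) - (k : ℤ) := by
    have hset : {e : ℤ | ∃ T : Submodule L V, Module.finrank L ↥T = k ∧ e = defect U T}
        = {(n : ℤ) - (k : ℤ)} := by
      ext e
      simp only [Set.mem_setOf_eq, Set.mem_singleton_iff]
      constructor
      · rintro ⟨T, hT, rfl⟩
        have : T = ⊤ := Submodule.eq_top_of_finrank_eq (by rw [hT, hkV])
        subst this
        have ht : U ⊓ (⊤ : Submodule L V).restrictScalars K = U := by
          simp
        unfold defect wt
        rw [ht, hUn, finrank_top, hkV]
      · rintro rfl
        have ht : U ⊓ (⊤ : Submodule L V).restrictScalars K = U := by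
          simp
        refine ⟨⊤, by rw [finrank_top, hkV], ?_⟩
        unfold defect wt
        rw [ht, hUn, finrank_top, hkV]
    rw [maxDefect, hset, csSup_singleton]
  refine ⟨hzero, hmono, htop, ?_⟩
  intro j hj1 hjk hj0 i hi1 hij
  have h1 := hmono 0 i (by omega) (by omega)
  have h2 := hmono i j hij hjk
  omega
end

section
/- Let U be an 𝔽_q-subspace of 𝕍(k,q^m) with dim_{𝔽_q}(U) = n and ⟨U⟩_{𝔽_{q^m}} = 𝕍(k,q^m), and let t_s = min{dim_{𝔽_{q^m}}(T) : T an 𝔽_{q^m}-subspace of 𝕍(k,q^m) with ε_U(T) = n−k}. Then t_s < k if and only if there exists an 𝔽_{q^m}-hyperplane H of 𝕍(k,q^m) such that w_U(H) = n − 1. -/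
/-- If a `K`-subspace `L`-spans the whole space, its `K`-dimension is at least the
`L`-dimension of the space. -/
lemma finrank_L_le_of_span_top {K L V : Type*} [Field K] [Field L] [Algebra K L]
    [AddCommGroup V] [Module K V] [Module L V] [IsScalarTower K L V]
    [FiniteDimensional K V]
    (W : Submodule K V) (h : Submodule.span L (W : Set V) = ⊤) :
    Module.finrank L V ≤ Module.finrank K ↥W := by
  let b := Module.finBasis K W
  have hspanW : Submodule.span K (Set.range fun i => (b i : V)) = W := by
    rw [show (fun i => (b i : V)) = W.subtype ∘ b from rfl, Set.range_comp,
      ← Submodule.map_span, b.span_eq, Submodule.map_top, Submodule.range_subtype]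
  have hv : Submodule.span L (Set.range fun i => (b i : V)) = ⊤ := by
    rw [eq_top_iff, ← h, Submodule.span_le]
    intro x hx
    have hxW : x ∈ W := hx
    rw [← hspanW] at hxW
    exact Submodule.span_le_restrictScalars K L _ hxW
  simpa using finrank_le_of_span_eq_top hv

lemma wt_bound {K L V : Type*} [Field K] [Field L] [Algebra K L]
    [AddCommGroup V] [Module K V] [Module L V] [IsScalarTower K L V]
    [FiniteDimensional L V] [FiniteDimensional K V]
    (U : Submodule K V) (hUspan : Submodule.span L (U : Set V) = ⊤)
    (T : Submodule L V) :
    wt U T + Module.finrank L V ≤ Module.finrank K ↥U + Module.finrank L ↥T := by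
  classical
  haveI : Module.Finite K (V ⧸ T) :=
    Module.Finite.of_surjective (T.mkQ.restrictScalars K) (Submodule.mkQ_surjective T)
  set g : ↥U →ₗ[K] V ⧸ T := (T.mkQ.restrictScalars K).comp U.subtype with hg
  have hker : LinearMap.ker g = Submodule.comap U.subtype (U ⊓ T.restrictScalars K) := by
    ext x
    simp [hg, Submodule.Quotient.mk_eq_zero, x.2]
  have hkerrank : Module.finrank K (LinearMap.ker g) = wt U T := by
    rw [hker]
    exact (Submodule.comapSubtypeEquivOfLe inf_le_left).finrank_eq
  have h1 : LinearMap.range g = Submodule.map (T.mkQ.restrictScalars K) U := by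
    rw [hg, LinearMap.range_comp, Submodule.range_subtype]
  have hrange : Submodule.span L ((LinearMap.range g : Submodule K (V ⧸ T)) : Set (V ⧸ T)) = ⊤ := by
    rw [h1, Submodule.map_coe, LinearMap.coe_restrictScalars, ← Submodule.map_span,
      hUspan, Submodule.map_top, Submodule.range_mkQ]
  have hQ : Module.finrank L (V ⧸ T) ≤ Module.finrank K (LinearMap.range g) :=
    finrank_L_le_of_span_top (LinearMap.range g) hrange
  have hrn : Module.finrank K (LinearMap.range g) + Module.finrank K (LinearMap.ker g)
      = Module.finrank K ↥U := LinearMap.finrank_range_add_finrank_ker g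
  have hq : Module.finrank L (V ⧸ T) + Module.finrank L ↥T = Module.finrank L V :=
    Submodule.finrank_quotient_add_finrank T
  omega

/-- Theorem 1.10: `t_s < k` iff there is a hyperplane of weight `n − 1`. -/
theorem statement1 {K L V : Type*} [Field K] [Field L] [Algebra K L]
    [Fintype K] [Fintype L]
    [AddCommGroup V] [Module K V] [Module L V] [IsScalarTower K L V]
    [FiniteDimensional L V]
    (m k n : ℕ) (hm : 0 < m) (hk : 0 < k) (hn : 0 < n)
    (hmL : Module.finrank K L = m) (hkV : Module.finrank L V = k)
    (U : Submodule K V) (hUn : Module.finrank K ↥U = n)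
    (hUspan : Submodule.span L (U : Set V) = ⊤) :
    sInf {r : ℕ | ∃ T : Submodule L V,
        Module.finrank L ↥T = r ∧ defect U T = (n : ℤ) - (k : ℤ)} < k ↔
      ∃ H : Submodule L V, Module.finrank L ↥H + 1 = k ∧ wt U H + 1 = n := by
  classical
  haveI : Module.Finite K L := Module.Finite.of_finite
  haveI : FiniteDimensional K V := Module.Finite.trans L V
  set S := {r : ℕ | ∃ T : Submodule L V,
      Module.finrank L ↥T = r ∧ defect U T = (n : ℤ) - (k : ℤ)} with hS
  have htop : wt U (⊤ : Submodule L V) = n := by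
    rw [wt, Submodule.restrictScalars_top, inf_top_eq, hUn]
  have hkS : k ∈ S := by
    refine ⟨⊤, by simpa using hkV, ?_⟩
    simp [defect, htop, hkV]
  -- the key step lemma
  have step : ∀ T : Submodule L V, Module.finrank L ↥T < k →
      wt U T + k = n + Module.finrank L ↥T →
      ∃ T' : Submodule L V, Module.finrank L ↥T' = Module.finrank L ↥T + 1 ∧
        wt U T' = wt U T + 1 := by
    intro T hTk hTeq
    obtain ⟨u, huU, huT⟩ : ∃ u, u ∈ U ∧ u ∉ T := by
      by_contra hcon
      push_neg at hcon
      have hsub : (U : Set V) ⊆ (T : Set V) := fun x hx => hcon x hx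
      have hle : Submodule.span L (U : Set V) ≤ T := Submodule.span_le.mpr hsub
      rw [hUspan, top_le_iff] at hle
      rw [hle] at hTk
      simp [hkV] at hTk
    have hu0 : u ≠ 0 := fun h => huT (h ▸ T.zero_mem)
    set T' := T ⊔ Submodule.span L {u} with hT'
    have huT' : u ∈ T' := Submodule.mem_sup_right (Submodule.mem_span_singleton_self u)
    have hlt : T < T' := lt_of_le_of_ne le_sup_left (fun h => huT (h ▸ huT'))
    have h1 : Module.finrank L ↥T' ≤ Module.finrank L ↥T + 1 := by
      have := Submodule.finrank_add_le_finrank_add_finrank T (Submodule.span L {u})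
      rwa [finrank_span_singleton hu0] at this
    have h2 : Module.finrank L ↥T < Module.finrank L ↥T' :=
      Submodule.finrank_lt_finrank_of_lt hlt
    have hT'rank : Module.finrank L ↥T' = Module.finrank L ↥T + 1 := by omega
    have hwlt : wt U T < wt U T' := by
      have hss : (U ⊓ T.restrictScalars K) < (U ⊓ T'.restrictScalars K) := by
        apply lt_of_le_of_ne
        · exact inf_le_inf_left U (fun x hx => le_of_lt hlt hx)
        · intro h
          have hmem : u ∈ U ⊓ T.restrictScalars K := h ▸ ⟨huU, huT'⟩
          exact huT hmem.2
      exact Submodule.finrank_lt_finrank_of_lt hss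
    have hbd := wt_bound U hUspan T'
    rw [hkV, hUn, hT'rank] at hbd
    exact ⟨T', hT'rank, by omega⟩
  -- induction to climb up to a hyperplane
  have aux : ∀ d : ℕ, ∀ T : Submodule L V,
      Module.finrank L ↥T + d + 1 = k →
      wt U T + k = n + Module.finrank L ↥T →
      ∃ H : Submodule L V, Module.finrank L ↥H + 1 = k ∧ wt U H + 1 = n := by
    intro d
    induction d with
    | zero =>
      intro T hdim heq
      exact ⟨T, by omega, by omega⟩
    | succ d ih =>
      intro T hdim heq
      obtain ⟨T', hT'1, hT'2⟩ := step T (by omega) heq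
      exact ih T' (by omega) (by omega)
  constructor
  · intro h
    obtain ⟨T, hT1, hT2⟩ := Nat.sInf_mem (⟨k, hkS⟩ : S.Nonempty)
    have hrlt : Module.finrank L ↥T < k := by rw [hT1]; exact h
    have heq : wt U T + k = n + Module.finrank L ↥T := by
      simp only [defect] at hT2
      omega
    exact aux (k - Module.finrank L ↥T - 1) T (by omega) heq
  · rintro ⟨H, hH1, hH2⟩
    have hmem : (k - 1) ∈ S := by
      refine ⟨H, by omega, ?_⟩
      simp only [defect]
      omega
    calc sInf S ≤ k - 1 := Nat.sInf_le hmem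
      _ < k := by omega
end

section
/- Let U be decomposable of type (𝐤,𝐧) in 𝕍(k,q^m) with dim_{𝔽_q}(U) = n and components F_1,…,F_t. Then the minimum dimension of an 𝔽_{q^m}-subspace of 𝕍(k,q^m) having defect n−k with respect to U equals k if and only if every component F_i (i ∈ {1,…,t}) is minimal with respect to its defect. Moreover, if this minimum dimension equals k, then every 𝔽_{q^m}-subspace of 𝕍(k,q^m) that is a sum of some of the components F_i is minimal with respect to its defect. -/
/-- `T` is minimal with respect to its defect (w.r.t. `U`): every proper
`𝔽_{q^m}`-subspace of `T` has strictly smaller defect. -/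
def IsMinimalWrtDefect {K L V : Type*} [Field K] [Field L] [Algebra K L]
    [AddCommGroup V] [Module K V] [Module L V] [IsScalarTower K L V]
    (U : Submodule K V) (T : Submodule L V) : Prop :=
  ∀ T' : Submodule L V, T' < T → defect U T' < defect U T

open Module Submodule

section Helpers

variable {K L V : Type*} [Field K] [Field L] [Algebra K L]
  [AddCommGroup V] [Module K V] [Module L V] [IsScalarTower K L V]

lemma restrictScalars_inf' (T₁ T₂ : Submodule L V) :
    (T₁ ⊓ T₂).restrictScalars K = T₁.restrictScalars K ⊓ T₂.restrictScalars K := rfl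

lemma restrictScalars_mono' {T₁ T₂ : Submodule L V} (h : T₁ ≤ T₂) :
    T₁.restrictScalars K ≤ T₂.restrictScalars K := by
  intro x hx
  rw [Submodule.restrictScalars_mem] at hx ⊢
  exact h hx

lemma restrictScalars_sup' (T₁ T₂ : Submodule L V) :
    (T₁ ⊔ T₂).restrictScalars K = T₁.restrictScalars K ⊔ T₂.restrictScalars K := by
  refine le_antisymm ?_ (sup_le (fun x hx => (le_sup_left : T₁ ≤ T₁ ⊔ T₂) hx)
    (fun x hx => (le_sup_right : T₂ ≤ T₁ ⊔ T₂) hx))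
  intro x hx
  rw [Submodule.restrictScalars_mem, Submodule.mem_sup] at hx
  obtain ⟨y, hy, z, hz, rfl⟩ := hx
  exact Submodule.add_mem _ (Submodule.mem_sup_left hy) (Submodule.mem_sup_right hz)

lemma finrank_map_add_finrank_inf_ker' {K V W : Type*} [Field K] [AddCommGroup V] [Module K V]
    [AddCommGroup W] [Module K W] (U : Submodule K V) [FiniteDimensional K U]
    (f : V →ₗ[K] W) :
    finrank K (U.map f) + finrank K ↥(U ⊓ LinearMap.ker f) = finrank K U := by
  have h := LinearMap.finrank_range_add_finrank_ker (f.domRestrict U)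
  rw [LinearMap.range_domRestrict, LinearMap.ker_domRestrict] at h
  rw [← h]
  congr 1
  have e1 : Submodule.comap U.subtype (LinearMap.ker f)
      = Submodule.comap U.subtype (U ⊓ LinearMap.ker f) := by
    rw [Submodule.comap_inf, Submodule.comap_subtype_self, top_inf_eq]
  rw [e1]
  exact (Submodule.comapSubtypeEquivOfLe inf_le_left).finrank_eq.symm

lemma finrank_spanL_le {Q : Type*} [AddCommGroup Q] [Module K Q] [Module L Q]
    [IsScalarTower K L Q] (W : Submodule K Q) [FiniteDimensional K W] :
    finrank L (span L (W : Set Q)) ≤ finrank K W := by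
  classical
  set d := finrank K W with hd
  let b : Basis (Fin d) K W := finBasis K W
  let fs : Finset Q := Finset.image (fun i => (b i : Q)) Finset.univ
  have hsub : (fs : Set Q) ⊆ (W : Set Q) := by
    intro x hx
    simp only [fs, Finset.coe_image, Finset.coe_univ, Set.image_univ] at hx
    obtain ⟨i, rfl⟩ := hx
    exact (b i).2
  have hspanK : span K (fs : Set Q) = W := by
    have : (fs : Set Q) = W.subtype '' (Set.range b) := by
      simp only [fs, Finset.coe_image, Finset.coe_univ, Set.image_univ, ← Set.range_comp]
      rfl
    rw [this, Submodule.span_image, b.span_eq, Submodule.map_top, Submodule.range_subtype]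
  have hspanL : span L (W : Set Q) = span L (fs : Set Q) := by
    refine le_antisymm ?_ (Submodule.span_mono hsub)
    rw [Submodule.span_le]
    intro x hx
    have : x ∈ span K (fs : Set Q) := by rw [hspanK]; exact hx
    have hle : span K (fs : Set Q) ≤ (span L (fs : Set Q)).restrictScalars K := by
      rw [Submodule.span_le]; exact Submodule.subset_span
    exact hle this
  rw [hspanL]
  calc finrank L (span L (fs : Set Q)) ≤ fs.card := finrank_span_finset_le_card fs
    _ ≤ d := by
      simpa [fs] using Finset.card_image_le (s := (Finset.univ : Finset (Fin d)))
        (f := fun i => (b i : Q))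

lemma defect_le_of_le_span [FiniteDimensional K V] [FiniteDimensional L V]
    (U : Submodule K V) (T : Submodule L V) (hT : T ≤ span L (U : Set V)) :
    defect U T ≤ (finrank K ↥U : ℤ) - (finrank L ↥(span L (U : Set V)) : ℤ) := by
  classical
  set S := span L (U : Set V) with hS
  let f : V →ₗ[K] V ⧸ T := (T.mkQ).restrictScalars K
  have hker : LinearMap.ker f = T.restrictScalars K := by
    ext x
    simp only [f, LinearMap.mem_ker, LinearMap.coe_restrictScalars, Submodule.restrictScalars_mem]
    rw [Submodule.mkQ_apply, Submodule.Quotient.mk_eq_zero]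
  have h1 : finrank K (U.map f) + finrank K ↥(U ⊓ T.restrictScalars K) = finrank K U := by
    rw [← hker]; exact finrank_map_add_finrank_inf_ker' U f
  have h2 : finrank L (S.map T.mkQ) + finrank L ↥T = finrank L S := by
    have h := finrank_map_add_finrank_inf_ker' S T.mkQ
    rwa [Submodule.ker_mkQ, inf_eq_right.mpr hT] at h
  have h3 : span L ((U.map f : Submodule K (V ⧸ T)) : Set (V ⧸ T)) = S.map T.mkQ := by
    have hfc : (⇑f : V → V ⧸ T) = ⇑T.mkQ := rfl
    rw [Submodule.map_coe, hfc, ← Submodule.map_span, hS]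
  haveI : Module.Finite K (V ⧸ T) :=
    Module.Finite.of_surjective f (Submodule.mkQ_surjective T)
  have h4 : finrank L (S.map T.mkQ) ≤ finrank K (U.map f) := by
    have h := finrank_spanL_le (K := K) (L := L) (U.map f)
    rwa [h3] at h
  show (wt U T : ℤ) - (finrank L ↥T : ℤ) ≤ _
  have hw : wt U T = finrank K ↥(U ⊓ T.restrictScalars K) := rfl
  omega

lemma wt_defect_supermodular [FiniteDimensional K V] [FiniteDimensional L V]
    (U : Submodule K V) (T₁ T₂ : Submodule L V) :
    defect U T₁ + defect U T₂ ≤ defect U (T₁ ⊔ T₂) + defect U (T₁ ⊓ T₂) := by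
  set A := U ⊓ T₁.restrictScalars K
  set B := U ⊓ T₂.restrictScalars K
  have hAB : finrank K ↥(A ⊔ B) + finrank K ↥(A ⊓ B) = finrank K ↥A + finrank K ↥B :=
    Submodule.finrank_sup_add_finrank_inf_eq A B
  have hsub : A ⊔ B ≤ U ⊓ (T₁ ⊔ T₂).restrictScalars K := by
    rw [restrictScalars_sup']
    exact sup_le (inf_le_inf_left U le_sup_left) (inf_le_inf_left U le_sup_right)
  have hinf : A ⊓ B = U ⊓ (T₁ ⊓ T₂).restrictScalars K := by
    ext x
    simp only [A, B, Submodule.mem_inf, Submodule.restrictScalars_mem]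
    tauto
  have hle : finrank K ↥(A ⊔ B) ≤ wt U (T₁ ⊔ T₂) := Submodule.finrank_mono hsub
  have hL : finrank L ↥(T₁ ⊔ T₂) + finrank L ↥(T₁ ⊓ T₂) = finrank L ↥T₁ + finrank L ↥T₂ :=
    Submodule.finrank_sup_add_finrank_inf_eq T₁ T₂
  have hwt1 : wt U T₁ = finrank K ↥A := rfl
  have hwt2 : wt U T₂ = finrank K ↥B := rfl
  have hwti : wt U (T₁ ⊓ T₂) = finrank K ↥(A ⊓ B) := by rw [hinf]; rfl
  simp only [defect, hwt1, hwt2, hwti]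
  omega

lemma finrank_biSup_eq_sum {R M : Type*} [Field R] [AddCommGroup M] [Module R M]
    [FiniteDimensional R M] {ι : Type*} [DecidableEq ι] {f : ι → Submodule R M}
    (hf : iSupIndep f) (s : Finset ι) :
    finrank R ↥(⨆ j ∈ s, f j) = ∑ j ∈ s, finrank R ↥(f j) := by
  classical
  induction s using Finset.induction with
  | empty => simp [finrank_bot]
  | @insert a s ha ih =>
    rw [Finset.sum_insert ha, ← ih, Finset.iSup_insert]
    have hd : Disjoint (f a) (⨆ j ∈ s, f j) := by
      have := hf.disjoint_biSup (y := (↑s : Set ι)) (by simpa using ha)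
      simpa [Finset.iSup_coe] using this
    have h := Submodule.finrank_sup_add_finrank_inf_eq (f a) (⨆ j ∈ s, f j)
    rw [disjoint_iff.mp hd, finrank_bot] at h
    omega

end Helpers

/-- Proposition 1.17(2)-(3). -/
theorem statement4 {K L V : Type*} [Field K] [Field L] [Algebra K L]
    [Fintype K] [Fintype L]
    [AddCommGroup V] [Module K V] [Module L V] [IsScalarTower K L V]
    [FiniteDimensional L V]
    (m : ℕ) (hm : 0 < m) (hmL : Module.finrank K L = m)
    (t : ℕ) (ht : 0 < t) (ks ns : Fin t → ℕ)
    (hks : ∀ i, 0 < ks i) (hns : ∀ i, ks i ≤ ns i)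
    (k n : ℕ) (hk : k = ∑ i, ks i) (hn : n = ∑ i, ns i)
    (hkV : Module.finrank L V = k)
    (U : Submodule K V) (hUn : Module.finrank K ↥U = n)
    (Us : Fin t → Submodule K V)
    (hUindep : iSupIndep Us) (hUsup : (⨆ i, Us i) = U)
    (hUdim : ∀ i, Module.finrank K ↥(Us i) = ns i)
    (F : Fin t → Submodule L V)
    (hF : ∀ i, F i = Submodule.span L ((Us i : Set V)))
    (hFindep : iSupIndep F) (hFsup : (⨆ i, F i) = ⊤)
    (hFdim : ∀ i, Module.finrank L ↥(F i) = ks i) :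
    (sInf {r : ℕ | ∃ T : Submodule L V,
        Module.finrank L ↥T = r ∧ defect U T = (n : ℤ) - (k : ℤ)} = k ↔
      ∀ i, IsMinimalWrtDefect U (F i)) ∧
    (sInf {r : ℕ | ∃ T : Submodule L V,
        Module.finrank L ↥T = r ∧ defect U T = (n : ℤ) - (k : ℤ)} = k →
      ∀ s : Finset (Fin t), IsMinimalWrtDefect U (⨆ j ∈ s, F j)) := by
  classical
  haveI : FiniteDimensional K V := Module.Finite.trans L V
  set G : Finset (Fin t) → Submodule L V := fun s => ⨆ j ∈ s, F j with hGdef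
  set Ws : Finset (Fin t) → Submodule K V := fun s => ⨆ j ∈ s, Us j with hWdef
  have hGmono : ∀ {a b : Finset (Fin t)}, a ⊆ b → G a ≤ G b := by
    intro a b hab
    exact biSup_mono fun i hi => hab hi
  have hGdim : ∀ s, finrank L ↥(G s) = ∑ j ∈ s, ks j := by
    intro s
    rw [show finrank L ↥(G s) = ∑ j ∈ s, finrank L ↥(F j) from finrank_biSup_eq_sum hFindep s]
    exact Finset.sum_congr rfl fun j _ => hFdim j
  have hWdim' : ∀ s, finrank K ↥(Ws s) = ∑ j ∈ s, ns j := by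
    intro s
    rw [show finrank K ↥(Ws s) = ∑ j ∈ s, finrank K ↥(Us j) from finrank_biSup_eq_sum hUindep s]
    exact Finset.sum_congr rfl fun j _ => hUdim j
  have hGdisj : ∀ {a b : Finset (Fin t)}, Disjoint a b → G a ⊓ G b = ⊥ := by
    intro a b hab
    have h1 := Submodule.finrank_sup_add_finrank_inf_eq (G a) (G b)
    have h2 : G a ⊔ G b = G (a ∪ b) := (Finset.iSup_union).symm
    have h3 : finrank L ↥(G (a ∪ b)) = ∑ j ∈ a ∪ b, ks j := hGdim _
    rw [Finset.sum_union hab] at h3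
    rw [h2, h3, hGdim a, hGdim b] at h1
    exact Submodule.finrank_eq_zero.mp (by omega)
  have hWleG : ∀ s, Ws s ≤ (G s).restrictScalars K := by
    intro s
    refine iSup₂_le fun j hj => ?_
    have h1 : Us j ≤ (F j).restrictScalars K := by
      rw [hF j]; intro x hx; exact Submodule.subset_span hx
    exact le_trans h1 (restrictScalars_mono' (le_biSup F hj))
  have hWsU : ∀ s, Ws s ≤ U := by
    intro s
    rw [← hUsup]
    exact iSup₂_le fun j _ => le_iSup Us j
  have hWuniv : Ws Finset.univ = U := by
    rw [← hUsup]
    exact le_antisymm (iSup₂_le fun j _ => le_iSup Us j)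
      (iSup_le fun j => le_biSup Us (Finset.mem_univ j))
  have hGuniv : G Finset.univ = ⊤ := by
    rw [← hFsup]
    exact le_antisymm (iSup₂_le fun j _ => le_iSup F j)
      (iSup_le fun j => le_biSup F (Finset.mem_univ j))
  have hUG : ∀ s, U ⊓ (G s).restrictScalars K = Ws s := by
    intro s
    refine le_antisymm ?_ (le_inf (hWsU s) (hWleG s))
    have hsplit : U = Ws s ⊔ Ws sᶜ := by
      rw [← hWuniv, ← Finset.union_compl s]
      exact Finset.iSup_union
    have hz : Ws sᶜ ⊓ (G s).restrictScalars K = ⊥ := by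
      refine le_bot_iff.mp (le_trans (inf_le_inf_right _ (hWleG sᶜ)) ?_)
      rw [← restrictScalars_inf' (K := K), hGdisj (disjoint_compl_left), Submodule.restrictScalars_bot]
    rw [hsplit, sup_inf_assoc_of_le _ (hWleG s), hz, sup_bot_eq]
  have hkey : ∀ (a b : Finset (Fin t)), Disjoint a b → ∀ T' : Submodule L V, T' ≤ G a →
      U ⊓ (T' ⊔ G b).restrictScalars K = (U ⊓ T'.restrictScalars K) ⊔ Ws b := by
    intro a b hab T' hT'
    have hTle : (T' ⊔ G b) ≤ G (a ∪ b) :=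
      sup_le (le_trans hT' (hGmono Finset.subset_union_left)) (hGmono Finset.subset_union_right)
    have hXY : (T' ⊔ G b).restrictScalars K ≤ (G (a ∪ b)).restrictScalars K :=
      restrictScalars_mono' hTle
    have h0 : U ⊓ (T' ⊔ G b).restrictScalars K
        = Ws (a ∪ b) ⊓ (T' ⊔ G b).restrictScalars K := by
      calc U ⊓ (T' ⊔ G b).restrictScalars K
          = U ⊓ ((G (a ∪ b)).restrictScalars K ⊓ (T' ⊔ G b).restrictScalars K) := by
            rw [inf_eq_right.mpr hXY]
        _ = (U ⊓ (G (a ∪ b)).restrictScalars K) ⊓ (T' ⊔ G b).restrictScalars K := by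
            rw [inf_assoc]
        _ = Ws (a ∪ b) ⊓ (T' ⊔ G b).restrictScalars K := by rw [hUG]
    have hWab : Ws (a ∪ b) = Ws a ⊔ Ws b := Finset.iSup_union
    have hGbK : Ws b ≤ (T' ⊔ G b).restrictScalars K :=
      le_trans (hWleG b) (restrictScalars_mono' le_sup_right)
    have hX : (T' ⊔ G b).restrictScalars K
        = T'.restrictScalars K ⊔ (G b).restrictScalars K := restrictScalars_sup' _ _
    have hT'K : T'.restrictScalars K ≤ (G a).restrictScalars K := restrictScalars_mono' hT'
    have hmod : ((T' ⊔ G b).restrictScalars K) ⊓ (G a).restrictScalars K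
        = T'.restrictScalars K := by
      rw [hX, sup_inf_assoc_of_le _ hT'K]
      rw [show (G b).restrictScalars K ⊓ (G a).restrictScalars K = ⊥ by
        rw [← restrictScalars_inf' (K := K), hGdisj hab.symm, Submodule.restrictScalars_bot]]
      rw [sup_bot_eq]
    have hWaX : Ws a ⊓ (T' ⊔ G b).restrictScalars K = U ⊓ T'.restrictScalars K := by
      calc Ws a ⊓ (T' ⊔ G b).restrictScalars K
          = (U ⊓ (G a).restrictScalars K) ⊓ (T' ⊔ G b).restrictScalars K := by rw [hUG]
        _ = U ⊓ ((T' ⊔ G b).restrictScalars K ⊓ (G a).restrictScalars K) := by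
            rw [inf_assoc, inf_comm ((G a).restrictScalars K)]
        _ = U ⊓ T'.restrictScalars K := by rw [hmod]
    rw [h0, hWab, sup_comm (Ws a) (Ws b), sup_inf_assoc_of_le _ hGbK, hWaX, sup_comm]
  have hdis2 : ∀ {a b : Finset (Fin t)}, Disjoint a b → ∀ (T' : Submodule L V), T' ≤ G a →
      defect U (T' ⊔ G b) = defect U T' + ∑ j ∈ b, ((ns j : ℤ) - (ks j : ℤ)) := by
    intro a b hab T' hT'
    have hw := hkey a b hab T' hT'
    have hdisK : (U ⊓ T'.restrictScalars K) ⊓ Ws b = ⊥ := by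
      refine le_bot_iff.mp (le_trans (inf_le_inf
        (le_trans inf_le_right (restrictScalars_mono' hT')) (hWleG b)) ?_)
      rw [← restrictScalars_inf' (K := K), hGdisj hab, Submodule.restrictScalars_bot]
    have h1 : finrank K ↥((U ⊓ T'.restrictScalars K) ⊔ Ws b)
        = finrank K ↥(U ⊓ T'.restrictScalars K) + ∑ j ∈ b, ns j := by
      have h := Submodule.finrank_sup_add_finrank_inf_eq (U ⊓ T'.restrictScalars K) (Ws b)
      rw [hdisK, finrank_bot, hWdim'] at h
      omega
    have h2 : finrank L ↥(T' ⊔ G b) = finrank L ↥T' + ∑ j ∈ b, ks j := by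
      have h := Submodule.finrank_sup_add_finrank_inf_eq T' (G b)
      have hdisL : T' ⊓ G b = ⊥ :=
        le_bot_iff.mp (le_trans (inf_le_inf_right _ hT') (le_of_eq (hGdisj hab)))
      rw [hdisL, finrank_bot, hGdim] at h
      omega
    have hwt : wt U (T' ⊔ G b) = wt U T' + ∑ j ∈ b, ns j := by
      simp only [wt]
      rw [hw, h1]
    simp only [defect]
    rw [hwt, h2, Finset.sum_sub_distrib]
    push_cast
    ring
  have hGdefect : ∀ s, defect U (G s) = ∑ j ∈ s, ((ns j : ℤ) - (ks j : ℤ)) := by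
    intro s
    simp only [defect, wt]
    rw [hUG s, hWdim' s, hGdim s, Finset.sum_sub_distrib]
    push_cast
    ring
  have hspanW : ∀ s, Submodule.span L ((Ws s : Submodule K V) : Set V) = G s := by
    intro s
    apply le_antisymm
    · rw [Submodule.span_le]
      intro x hx
      exact hWleG s hx
    · refine iSup₂_le fun j hj => ?_
      rw [hF j]
      exact Submodule.span_mono fun x hx => (le_biSup Us hj) hx
  have hbound : ∀ s (T' : Submodule L V), T' ≤ G s →
      defect U T' ≤ ∑ j ∈ s, ((ns j : ℤ) - (ks j : ℤ)) := by
    intro s T' hT'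
    have hT'K : T'.restrictScalars K ≤ (G s).restrictScalars K := restrictScalars_mono' hT'
    have hUT : U ⊓ T'.restrictScalars K = Ws s ⊓ T'.restrictScalars K := by
      calc U ⊓ T'.restrictScalars K
          = U ⊓ ((G s).restrictScalars K ⊓ T'.restrictScalars K) := by
            rw [inf_eq_right.mpr hT'K]
        _ = (U ⊓ (G s).restrictScalars K) ⊓ T'.restrictScalars K := by rw [inf_assoc]
        _ = Ws s ⊓ T'.restrictScalars K := by rw [hUG]
    have hfr : finrank K ↥(U ⊓ T'.restrictScalars K) = finrank K ↥(Ws s ⊓ T'.restrictScalars K) :=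
      congrArg (fun p : Submodule K V => finrank K ↥p) hUT
    have heq : defect U T' = defect (Ws s) T' := by
      simp only [defect, wt]
      rw [hfr]
    rw [heq]
    have h := defect_le_of_le_span (Ws s) T' (by rw [hspanW]; exact hT')
    rw [hspanW, hWdim', hGdim] at h
    rw [Finset.sum_sub_distrib]
    push_cast at h ⊢
    exact h
  have hnk : ∑ j, ((ns j : ℤ) - (ks j : ℤ)) = (n : ℤ) - (k : ℤ) := by
    rw [hk, hn, Finset.sum_sub_distrib]
    push_cast
    ring
  have htopd : defect U (⊤ : Submodule L V) = (n : ℤ) - (k : ℤ) := by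
    have h := hGdefect Finset.univ
    rw [hGuniv] at h
    rw [h, hnk]
  have hGi : ∀ i, G ({i} : Finset (Fin t)) = F i := by
    intro i
    exact Finset.iSup_singleton i F
  have hQ : (∀ i, IsMinimalWrtDefect U (F i)) → ∀ s : Finset (Fin t), ∀ T : Submodule L V,
      T ≤ G s → defect U T = ∑ j ∈ s, ((ns j : ℤ) - (ks j : ℤ)) → T = G s := by
    intro hmin s
    induction s using Finset.strongInduction with
    | _ s ih =>
      intro T hTle hTd
      rcases Finset.eq_empty_or_nonempty s with rfl | ⟨i, hi⟩
      · have hb : G (∅ : Finset (Fin t)) = ⊥ := by simp [hGdef]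
        rw [hb] at hTle ⊢
        exact le_bot_iff.mp hTle
      · set s' := s.erase i with hs'
        have hss' : s' ⊂ s := Finset.erase_ssubset hi
        have hins : insert i s' = s := Finset.insert_erase hi
        have hnis' : i ∉ s' := Finset.notMem_erase i s
        have hsum : ∑ j ∈ s, ((ns j : ℤ) - (ks j : ℤ))
            = ((ns i : ℤ) - (ks i : ℤ)) + ∑ j ∈ s', ((ns j : ℤ) - (ks j : ℤ)) := by
          rw [← hins, Finset.sum_insert hnis']
        have hs'le : G s' ≤ G s := hGmono (Finset.erase_subset i s)
        have h1 : defect U (T ⊓ G s') ≤ ∑ j ∈ s', ((ns j : ℤ) - (ks j : ℤ)) :=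
          hbound s' _ inf_le_right
        have h2 : defect U (T ⊔ G s') ≤ ∑ j ∈ s, ((ns j : ℤ) - (ks j : ℤ)) :=
          hbound s _ (sup_le hTle hs'le)
        have hG' : defect U (G s') = ∑ j ∈ s', ((ns j : ℤ) - (ks j : ℤ)) := hGdefect s'
        have hsup := wt_defect_supermodular U T (G s')
        have e1 : defect U (T ⊓ G s') = ∑ j ∈ s', ((ns j : ℤ) - (ks j : ℤ)) := by linarith
        have hGle : G s' ≤ T := by
          have h := ih s' hss' (T ⊓ G s') inf_le_right e1
          rw [← h]
          exact inf_le_left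
        have hGs : G s = F i ⊔ G s' := by
          rw [← hins]
          exact Finset.iSup_insert i s' F
        have hmodT : T = (T ⊓ F i) ⊔ G s' := by
          have hT2 : T ≤ G s' ⊔ F i := by rw [sup_comm, ← hGs]; exact hTle
          calc T = (G s' ⊔ F i) ⊓ T := (inf_eq_right.mpr hT2).symm
            _ = G s' ⊔ (F i ⊓ T) := sup_inf_assoc_of_le (F i) hGle
            _ = (T ⊓ F i) ⊔ G s' := by rw [inf_comm (F i) T, sup_comm]
        have hdT : defect U T = defect U (T ⊓ F i) + ∑ j ∈ s', ((ns j : ℤ) - (ks j : ℤ)) := by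
          conv_lhs => rw [hmodT]
          exact hdis2 (a := {i}) (b := s') (Finset.disjoint_singleton_left.mpr hnis')
            (T ⊓ F i) (by rw [hGi i]; exact inf_le_right)
        have hdFi : defect U (T ⊓ F i) = (ns i : ℤ) - (ks i : ℤ) := by
          rw [hTd, hsum] at hdT
          linarith
        have hFi_d : defect U (F i) = (ns i : ℤ) - (ks i : ℤ) := by
          have h := hGdefect ({i} : Finset (Fin t))
          rw [hGi i] at h
          simpa using h
        have hTF : T ⊓ F i = F i := by
          by_contra hne
          have hlt : T ⊓ F i < F i := lt_of_le_of_ne inf_le_right hne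
          have h := hmin i _ hlt
          rw [hdFi, hFi_d] at h
          exact lt_irrefl _ h
        rw [hmodT, hTF]
        exact hGs.symm
  have hR : (∀ T : Submodule L V, defect U T = (n : ℤ) - (k : ℤ) → T = ⊤) →
      ∀ s : Finset (Fin t), IsMinimalWrtDefect U (G s) := by
    intro htop s T' hT'
    by_contra hcon
    push_neg at hcon
    have hd := hdis2 (a := s) (b := sᶜ) disjoint_compl_right T' hT'.le
    have hub : defect U (T' ⊔ G sᶜ) ≤ (n : ℤ) - (k : ℤ) := by
      have h := hbound Finset.univ (T' ⊔ G sᶜ) (by rw [hGuniv]; exact le_top)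
      rwa [hnk] at h
    have hGsd := hGdefect s
    have hlb : (n : ℤ) - (k : ℤ) ≤ defect U (T' ⊔ G sᶜ) := by
      have hsplit : (n : ℤ) - (k : ℤ)
          = ∑ j ∈ s, ((ns j : ℤ) - (ks j : ℤ)) + ∑ j ∈ sᶜ, ((ns j : ℤ) - (ks j : ℤ)) := by
        rw [← hnk, ← Finset.sum_union disjoint_compl_right, Finset.union_compl]
      rw [hd, hsplit]
      linarith
    have heq : T' ⊔ G sᶜ = ⊤ := htop _ (le_antisymm hub hlb)
    have hGsT : G s = T' := by
      have h1 : (T' ⊔ G sᶜ) ⊓ G s = T' := by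
        rw [sup_inf_assoc_of_le _ hT'.le, hGdisj disjoint_compl_left, sup_bot_eq]
      rw [heq, top_inf_eq] at h1
      exact h1
    exact hT'.ne hGsT.symm
  have hkD : k ∈ {r : ℕ | ∃ T : Submodule L V,
      Module.finrank L ↥T = r ∧ defect U T = (n : ℤ) - (k : ℤ)} :=
    ⟨⊤, by rw [finrank_top]; exact hkV, htopd⟩
  have hEquiv : sInf {r : ℕ | ∃ T : Submodule L V,
      Module.finrank L ↥T = r ∧ defect U T = (n : ℤ) - (k : ℤ)} = k ↔
      ∀ T : Submodule L V, defect U T = (n : ℤ) - (k : ℤ) → T = ⊤ := by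
    constructor
    · intro hinf T hT
      have hmem : finrank L ↥T ∈ {r : ℕ | ∃ T : Submodule L V,
          Module.finrank L ↥T = r ∧ defect U T = (n : ℤ) - (k : ℤ)} := ⟨T, rfl, hT⟩
      have h1 : k ≤ finrank L ↥T := hinf ▸ Nat.sInf_le hmem
      have h2 : finrank L ↥T ≤ k := hkV ▸ Submodule.finrank_le T
      apply Submodule.eq_top_of_finrank_eq
      rw [le_antisymm h2 h1, hkV]
    · intro h
      refine le_antisymm (Nat.sInf_le hkD) (le_csInf ⟨k, hkD⟩ ?_)
      rintro r ⟨T, hrT, hdT⟩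
      rw [← hrT, h T hdT, finrank_top]
      exact hkV.ge
  constructor
  · rw [hEquiv]
    constructor
    · intro htop i
      have h := hR htop {i}
      rwa [hGi i] at h
    · intro hmin T hT
      have h := hQ hmin Finset.univ T (by rw [hGuniv]; exact le_top) (by rw [hnk]; exact hT)
      rw [h, hGuniv]
  · intro h s
    exact hR (hEquiv.mp h) s
end

section
/- Let U be decomposable of type (𝐤,𝐧) in 𝕍(k,q^m), with k_i < n_i for all i ∈ {1,…,t}, and with components U_1,…,U_t and F_i = ⟨U_i⟩_{𝔽_{q^m}}. Then U is 𝐤-scattered with respect to the hyperplanes if and only if the only 𝔽_{q^m}-subspaces of 𝕍(k,q^m) having positive defect with respect to U and minimal with respect to their defect are exactly the subspaces that are sums of some of the components F_i, i ∈ {1,…,t}. -/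
/-!
Call an `L`-subspace free if it contains no component `Fᵢ`. Since `U ∩ F_s = U_s`, the sums
`F_s = ⨁_{i ∈ s} Fᵢ` have defect `∑_{i ∈ s} (nᵢ - kᵢ) > 0`, and a subspace `T ⊇ F_s` splits as
`F_s ⊕ (T ∩ F_{sᶜ})` with additive weight and dimension. So both sides of the equivalence amount
to: every free subspace has defect `≤ 0`. For the right-hand side this is because a free subspace
of positive defect would contain a minimal one, i.e. some `F_s`; conversely a minimal `T` has defect
at most that of `F_s` for `s = {i | Fᵢ ≤ T}`, hence equals it.

For the hyperplane conditions, a free subspace `T` of positive defect that is not a hyperplane can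
be replaced by a free subspace of larger weight and no smaller defect: add a vector `y ∈ U ∖ T`,
and if `T + ⟨y⟩` contains some components, trade the line `⟨y⟩` for a line `⟨a + b⟩` with `a` and
`b` taken from `U` on either side of the split. A free subspace of positive defect and maximal
weight would therefore be a free hyperplane of positive defect.
-/

open Module Submodule

section LinearAlgebra

variable {L V : Type*} [Field L] [AddCommGroup V] [Module L V]

lemma finrank_sup_of_disjoint [FiniteDimensional L V] {A B : Submodule L V} (h : Disjoint A B) :
    finrank L ↥(A ⊔ B) = finrank L A + finrank L B := by
  rw [← finrank_sup_add_finrank_inf_eq, h.eq_bot, finrank_bot, add_zero]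

variable {P Q A B : Submodule L V} {a b : V}

lemma add_notMem_sup (hPQ : Disjoint P Q) (hA : A ≤ P) (hB : B ≤ Q) (ha : a ∈ P) (hb : b ∈ Q)
    (haA : a ∉ A) : a + b ∉ A ⊔ B := by
  intro h
  obtain ⟨α, hα, β, hβ, hαβ⟩ := mem_sup.1 h
  have hsub : a - α = β - b := by rw [sub_eq_sub_iff_add_eq_add, ← hαβ, add_comm]
  have hzero : a - α = 0 :=
    disjoint_def.1 hPQ _ (sub_mem ha (hA hα)) (hsub ▸ sub_mem (hB hβ) hb)
  exact haA (sub_eq_zero.1 hzero ▸ hα)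

lemma sup_sup_span_add_inf_left (hPQ : Disjoint P Q) (hA : A ≤ P) (hB : B ≤ Q) (ha : a ∈ P)
    (hb : b ∈ Q) (hbB : b ∉ B) : (A ⊔ B ⊔ span L {a + b}) ⊓ P = A := by
  refine le_antisymm ?_ (le_inf (le_sup_left.trans le_sup_left) hA)
  rintro x ⟨hxC, hxP⟩
  obtain ⟨y, hy, z, hz, rfl⟩ := mem_sup.1 hxC
  obtain ⟨α, hα, β, hβ, rfl⟩ := mem_sup.1 hy
  obtain ⟨c, rfl⟩ := mem_span_singleton.1 hz
  -- the `Q`-component `β + c • b` of `x` vanishes, which forces `c = 0`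
  have hQpart : β + c • b = 0 := by
    refine disjoint_def.1 hPQ _ ?_ (add_mem (hB hβ) (smul_mem _ c hb))
    convert sub_mem (sub_mem hxP (hA hα)) (smul_mem _ c ha) using 1
    rw [smul_add]; abel
  have hc : c = 0 := by
    by_contra hc
    refine hbB ((smul_mem_iff B hc).1 ?_)
    rw [eq_neg_of_add_eq_zero_right hQpart]
    exact neg_mem hβ
  rw [hc, zero_smul, add_zero] at hQpart ⊢
  rwa [hQpart, add_zero]

lemma sup_sup_span_add_inf_right (hPQ : Disjoint P Q) (hA : A ≤ P) (hB : B ≤ Q) (ha : a ∈ P)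
    (hb : b ∈ Q) (haA : a ∉ A) : (A ⊔ B ⊔ span L {a + b}) ⊓ Q = B := by
  rw [sup_comm A, add_comm]
  exact sup_sup_span_add_inf_left hPQ.symm hB hA hb ha haA

lemma finrank_sup_sup_span_add [FiniteDimensional L V] (hPQ : Disjoint P Q) (hA : A ≤ P)
    (hB : B ≤ Q) (ha : a ∈ P) (hb : b ∈ Q) (haA : a ∉ A) :
    finrank L ↥(A ⊔ B ⊔ span L {a + b}) = finrank L A + finrank L B + 1 := by
  rw [finrank_sup_span_singleton (add_notMem_sup hPQ hA hB ha hb haA),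
    finrank_sup_of_disjoint (hPQ.mono hA hB)]

end LinearAlgebra

section Weight

variable {K L V : Type*} [Field K] [Field L] [Algebra K L]
  [AddCommGroup V] [Module K V] [Module L V] [IsScalarTower K L V]
  (U : Submodule K V)

lemma wt_bot : wt U (⊥ : Submodule L V) = 0 := by
  rw [wt, restrictScalars_bot, inf_bot_eq, finrank_bot]

lemma exists_le_isMinimalWrtDefect [FiniteDimensional L V] {T : Submodule L V}
    (h : 0 < defect U T) : ∃ T' ≤ T, 0 < defect U T' ∧ IsMinimalWrtDefect U T' := by
  obtain ⟨T', ⟨hT'T, hT'pos⟩, hmin⟩ :=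
    wellFounded_lt.has_min {T' : Submodule L V | T' ≤ T ∧ 0 < defect U T'} ⟨T, le_rfl, h⟩
  refine ⟨T', hT'T, hT'pos, fun T'' hlt => ?_⟩
  have : ¬ 0 < defect U T'' := fun hpos => hmin T'' ⟨hlt.le.trans hT'T, hpos⟩ hlt
  omega

lemma defect_nonpos_of_isMinimalWrtDefect [FiniteDimensional L V] {ι : Type*}
    {F : ι → Submodule L V}
    (h : ∀ T : Submodule L V, 0 < defect U T ∧ IsMinimalWrtDefect U T →
      ∃ s : Finset ι, s.Nonempty ∧ T = ⨆ j ∈ s, F j)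
    {T : Submodule L V} (hT : ∀ i, ¬ F i ≤ T) : defect U T ≤ 0 := by
  by_contra! hpos
  obtain ⟨T', hT'T, hT'⟩ := exists_le_isMinimalWrtDefect U hpos
  obtain ⟨s, ⟨j, hj⟩, rfl⟩ := h T' hT'
  exact hT j ((le_biSup F hj).trans hT'T)

variable [FiniteDimensional K V]

lemma wt_mono {A B : Submodule L V} (h : A ≤ B) : wt U A ≤ wt U B :=
  finrank_mono (inf_le_inf_left U (restrictScalars_mono K h))

lemma wt_add_wt_le_wt_sup_add_wt_inf (A B : Submodule L V) :
    wt U A + wt U B ≤ wt U (A ⊔ B) + wt U (A ⊓ B) := by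
  have hsup : (U ⊓ A.restrictScalars K) ⊔ (U ⊓ B.restrictScalars K)
      ≤ U ⊓ (A ⊔ B).restrictScalars K := by
    rw [restrictScalars_sup]
    exact sup_le (inf_le_inf_left U le_sup_left) (inf_le_inf_left U le_sup_right)
  have hinf : (U ⊓ A.restrictScalars K) ⊓ (U ⊓ B.restrictScalars K)
      = U ⊓ (A ⊓ B).restrictScalars K := by
    rw [restrictScalars_inf]
    ext x
    simp only [mem_inf]
    tauto
  have := finrank_sup_add_finrank_inf_eq (U ⊓ A.restrictScalars K) (U ⊓ B.restrictScalars K)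
  rw [hinf] at this
  unfold wt
  linarith [finrank_mono hsup]

lemma wt_add_one_le_wt_sup_span {T : Submodule L V} {y : V} (hyU : y ∈ U) (hyT : y ∉ T) :
    wt U T + 1 ≤ wt U (T ⊔ span L {y}) := by
  have hle : (U ⊓ T.restrictScalars K) ⊔ span K {y} ≤ U ⊓ (T ⊔ span L {y}).restrictScalars K := by
    refine sup_le (inf_le_inf_left U (restrictScalars_mono K le_sup_left)) ?_
    rw [span_le, Set.singleton_subset_iff]
    exact ⟨hyU, mem_sup_right (mem_span_singleton_self y)⟩
  unfold wt
  rw [← finrank_sup_span_singleton (p := U ⊓ T.restrictScalars K) (fun h => hyT (mem_inf.1 h).2)]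
  exact finrank_mono hle

lemma wt_sup_sup_span_add {P Q A B : Submodule L V} {a b : V} (hPQ : Disjoint P Q) (hA : A ≤ P)
    (hB : B ≤ Q) (ha : a ∈ P) (hb : b ∈ Q) (haA : a ∉ A) (habU : a + b ∈ U) :
    wt U A + wt U B + 1 ≤ wt U (A ⊔ B ⊔ span L {a + b}) := by
  have h1 := wt_add_wt_le_wt_sup_add_wt_inf U A B
  have h2 := wt_add_one_le_wt_sup_span U habU (add_notMem_sup hPQ hA hB ha hb haA)
  rw [(hPQ.mono hA hB).eq_bot, wt_bot] at h1
  omega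

end Weight

lemma biSup_sup_biSup_compl {ι α : Type*} [Fintype ι] [DecidableEq ι] [CompleteLattice α]
    (f : ι → α) (s : Finset ι) : (⨆ i ∈ s, f i) ⊔ (⨆ i ∈ sᶜ, f i) = ⨆ i, f i := by
  rw [← Finset.iSup_union, Finset.union_compl]
  simp

lemma iSupIndep.disjoint_biSup_finset {ι α : Type*} [CompleteLattice α] [IsModularLattice α]
    {f : ι → α} (hf : iSupIndep f) {s t : Finset ι} (hst : Disjoint s t) :
    Disjoint (⨆ i ∈ s, f i) (⨆ i ∈ t, f i) := by
  simpa using hf.disjoint_biSup_biSup' (s := ↑s) (t := ↑t) (by simpa) s.finite_toSet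

lemma iSupIndep.finrank_biSup {ι R W : Type*} [DecidableEq ι] [Field R] [AddCommGroup W]
    [Module R W] [FiniteDimensional R W] {p : ι → Submodule R W} (hp : iSupIndep p)
    (s : Finset ι) : finrank R ↥(⨆ i ∈ s, p i) = ∑ i ∈ s, finrank R (p i) := by
  induction s using Finset.induction_on with
  | empty => simp
  | insert j s hj ih =>
    have hdisj : Disjoint (p j) (⨆ i ∈ s, p i) := by simpa using hp.disjoint_biSup (y := ↑s) hj
    rw [Finset.iSup_insert, finrank_sup_of_disjoint hdisj, Finset.sum_insert hj, ih]

structure IsDecomposition {ι K L V : Type*} [Field K] [Field L] [Algebra K L]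
    [AddCommGroup V] [Module K V] [Module L V] [IsScalarTower K L V]
    (U : Submodule K V) (Us : ι → Submodule K V) (F : ι → Submodule L V) : Prop where
  span_eq : ∀ i, F i = span L (Us i : Set V)
  iSupIndep_F : iSupIndep F
  iSup_F : ⨆ i, F i = ⊤
  iSupIndep_Us : iSupIndep Us
  iSup_Us : ⨆ i, Us i = U

namespace IsDecomposition

variable {ι K L V : Type*} [Field K] [Field L] [Algebra K L]
  [AddCommGroup V] [Module K V] [Module L V] [IsScalarTower K L V]
  {U : Submodule K V} {Us : ι → Submodule K V} {F : ι → Submodule L V}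

lemma Us_le (hD : IsDecomposition U Us F) (i : ι) : Us i ≤ U :=
  hD.iSup_Us ▸ le_iSup Us i

lemma le_restrictScalars (hD : IsDecomposition U Us F) (i : ι) :
    Us i ≤ (F i).restrictScalars K := by
  rw [hD.span_eq i]
  exact fun x hx => subset_span hx

lemma exists_mem_notMem (hD : IsDecomposition U Us F) {i : ι} {T : Submodule L V}
    (h : ¬ F i ≤ T) : ∃ y ∈ Us i, y ∉ T := by
  by_contra! hle
  exact h (hD.span_eq i ▸ span_le.2 hle)

lemma ne_bot (hD : IsDecomposition U Us F) {i : ι}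
    (hlt : finrank L (F i) < finrank K (Us i)) : F i ≠ ⊥ := by
  intro h
  have hUs : Us i = ⊥ := le_bot_iff.1 (by simpa [h] using hD.le_restrictScalars i)
  rw [h, hUs, finrank_bot, finrank_bot] at hlt
  exact lt_irrefl 0 hlt

lemma mem_of_le_biSup (hD : IsDecomposition U Us F) {i : ι} (h0 : F i ≠ ⊥) {s : Finset ι}
    (h : F i ≤ ⨆ j ∈ s, F j) : i ∈ s := by
  by_contra hi
  have hdisj : Disjoint (F i) (⨆ j ∈ s, F j) := by
    simpa using hD.iSupIndep_F.disjoint_biSup (y := ↑s) hi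
  exact h0 (hdisj.eq_bot_of_le h)

lemma forall_not_le_of_le (hD : IsDecomposition U Us F) (h0 : ∀ j, F j ≠ ⊥) {i : ι}
    {H : Submodule L V} (hH : H ≤ F i) (hi : ¬ F i ≤ H) : ∀ j, ¬ F j ≤ H := by
  intro j hj
  rcases eq_or_ne j i with rfl | hji
  · exact hi hj
  · exact h0 j ((hD.iSupIndep_F.pairwiseDisjoint hji).eq_bot_of_le (hj.trans hH))

lemma biSup_Us_le (hD : IsDecomposition U Us F) (s : Finset ι) :
    ⨆ i ∈ s, Us i ≤ (⨆ i ∈ s, F i).restrictScalars K :=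
  iSup₂_le fun i hi => (hD.le_restrictScalars i).trans (restrictScalars_mono K (le_biSup F hi))

lemma disjoint_biSup_Us (hD : IsDecomposition U Us F) {s t : Finset ι} (hst : Disjoint s t) :
    Disjoint (⨆ i ∈ s, Us i) ((⨆ i ∈ t, F i).restrictScalars K) :=
  ((disjoint_restrictScalars_iff K).2 (hD.iSupIndep_F.disjoint_biSup_finset hst)).mono_left
    (hD.biSup_Us_le s)

variable [Fintype ι] [DecidableEq ι]

lemma inf_biSup (hD : IsDecomposition U Us F) (s : Finset ι) :
    U ⊓ (⨆ i ∈ s, F i).restrictScalars K = ⨆ i ∈ s, Us i := by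
  refine le_antisymm (le_of_eq ?_) (le_inf (iSup₂_le fun i _ => hD.Us_le i) (hD.biSup_Us_le s))
  calc U ⊓ (⨆ i ∈ s, F i).restrictScalars K
      = ((⨆ i ∈ s, Us i) ⊔ ⨆ i ∈ sᶜ, Us i) ⊓ (⨆ i ∈ s, F i).restrictScalars K := by
        rw [biSup_sup_biSup_compl, hD.iSup_Us]
    _ = ⨆ i ∈ s, Us i := by
        rw [sup_inf_assoc_of_le _ (hD.biSup_Us_le s),
          (hD.disjoint_biSup_Us disjoint_compl_left).eq_bot, sup_bot_eq]

lemma finrank_eq_of_biSup_le [FiniteDimensional L V] (hD : IsDecomposition U Us F)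
    {s : Finset ι} {T : Submodule L V} (h : ⨆ i ∈ s, F i ≤ T) :
    finrank L T = finrank L ↥(⨆ i ∈ s, F i) + finrank L ↥(T ⊓ ⨆ i ∈ sᶜ, F i) := by
  have hsplit : T = (⨆ i ∈ s, F i) ⊔ T ⊓ ⨆ i ∈ sᶜ, F i := by
    rw [inf_comm, ← sup_inf_assoc_of_le _ h, biSup_sup_biSup_compl, hD.iSup_F, top_inf_eq]
  conv_lhs => rw [hsplit]
  exact finrank_sup_of_disjoint
    ((hD.iSupIndep_F.disjoint_biSup_finset disjoint_compl_right).mono_right inf_le_right)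

lemma wt_eq_of_biSup_le [FiniteDimensional K V] (hD : IsDecomposition U Us F)
    {s : Finset ι} {T : Submodule L V} (h : ⨆ i ∈ s, F i ≤ T) :
    wt U T = wt U (⨆ i ∈ s, F i) + wt U (T ⊓ ⨆ i ∈ sᶜ, F i) := by
  have hUs : ⨆ i ∈ s, Us i ≤ T.restrictScalars K :=
    (hD.biSup_Us_le s).trans (restrictScalars_mono K h)
  have hsplit : U ⊓ T.restrictScalars K
      = (⨆ i ∈ s, Us i) ⊔ U ⊓ (T ⊓ ⨆ i ∈ sᶜ, F i).restrictScalars K := by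
    calc U ⊓ T.restrictScalars K
        = ((⨆ i ∈ s, Us i) ⊔ ⨆ i ∈ sᶜ, Us i) ⊓ T.restrictScalars K := by
          rw [biSup_sup_biSup_compl, hD.iSup_Us]
      _ = (⨆ i ∈ s, Us i) ⊔ (U ⊓ (⨆ i ∈ sᶜ, F i).restrictScalars K) ⊓ T.restrictScalars K := by
          rw [sup_inf_assoc_of_le _ hUs, hD.inf_biSup]
      _ = _ := by rw [restrictScalars_inf]; ac_rfl
  have hdisj : Disjoint (⨆ i ∈ s, Us i) (U ⊓ (T ⊓ ⨆ i ∈ sᶜ, F i).restrictScalars K) := by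
    refine (hD.disjoint_biSup_Us disjoint_compl_right).mono_right ?_
    exact inf_le_right.trans (restrictScalars_mono K inf_le_right)
  rw [wt, hsplit, finrank_sup_of_disjoint hdisj, wt, hD.inf_biSup, wt]

variable [FiniteDimensional K V] [FiniteDimensional L V]

lemma defect_biSup (hD : IsDecomposition U Us F) (s : Finset ι) :
    defect U (⨆ i ∈ s, F i) = ∑ i ∈ s, ((finrank K (Us i) : ℤ) - finrank L (F i)) := by
  rw [defect, wt, hD.inf_biSup, hD.iSupIndep_Us.finrank_biSup, hD.iSupIndep_F.finrank_biSup,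
    Finset.sum_sub_distrib]
  push_cast
  rfl

lemma defect_eq_of_biSup_le (hD : IsDecomposition U Us F) {s : Finset ι} {T : Submodule L V}
    (h : ⨆ i ∈ s, F i ≤ T) :
    defect U T = defect U (⨆ i ∈ s, F i) + defect U (T ⊓ ⨆ i ∈ sᶜ, F i) := by
  simp only [defect, hD.wt_eq_of_biSup_le h, hD.finrank_eq_of_biSup_le h]
  push_cast
  ring

/- The witness is `(T ∩ F_s) ⊕ (T₂ ∩ F_{sᶜ}) ⊕ ⟨a + b⟩` with `a ∈ U_s ∖ T` and
`b ∈ U_{sᶜ} ∖ T₂`: it meets `F_s` in `T ∩ F_s` and `F_{sᶜ}` in `T₂ ∩ F_{sᶜ}`, so it contains no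
component. -/
lemma exists_wt_lt_of_le_of_finrank_eq_succ (hD : IsDecomposition U Us F)
    {T T₂ : Submodule L V} (hT : ∀ i, ¬ F i ≤ T) (hTT₂ : T ≤ T₂)
    (hrank : finrank L T₂ = finrank L T + 1)
    {s : Finset ι} (hs : ∀ i, i ∈ s ↔ F i ≤ T₂) (hsne : s.Nonempty) (hsc : sᶜ.Nonempty) :
    ∃ C : Submodule L V, (∀ i, ¬ F i ≤ C) ∧ defect U T ≤ defect U C ∧ wt U T < wt U C := by
  set P := ⨆ i ∈ s, F i
  set Q := ⨆ i ∈ sᶜ, F i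
  have hPQ : Disjoint P Q := hD.iSupIndep_F.disjoint_biSup_finset disjoint_compl_right
  have hPT₂ : P ≤ T₂ := iSup₂_le fun i hi => (hs i).1 hi
  obtain ⟨j, hj⟩ := hsne
  obtain ⟨j', hj'⟩ := hsc
  obtain ⟨a, haUs, haT⟩ := hD.exists_mem_notMem (hT j)
  obtain ⟨b, hbUs, hbT₂⟩ :=
    hD.exists_mem_notMem fun h => Finset.mem_compl.1 hj' ((hs j').2 h)
  have haP : a ∈ P := le_biSup F hj (hD.le_restrictScalars j haUs)
  have hbQ : b ∈ Q := le_biSup F hj' (hD.le_restrictScalars j' hbUs)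
  have haA : a ∉ T ⊓ P := fun h => haT h.1
  have hbB : b ∉ T₂ ⊓ Q := fun h => hbT₂ h.1
  set C := T ⊓ P ⊔ T₂ ⊓ Q ⊔ span L {a + b}
  have hCP : C ⊓ P = T ⊓ P := sup_sup_span_add_inf_left hPQ inf_le_right inf_le_right haP hbQ hbB
  have hCQ : C ⊓ Q = T₂ ⊓ Q := sup_sup_span_add_inf_right hPQ inf_le_right inf_le_right haP hbQ haA
  have hC : ∀ i, ¬ F i ≤ C := by
    intro i hi
    by_cases his : i ∈ s
    · exact hT i ((le_inf hi (le_biSup F his)).trans (hCP.le.trans inf_le_left))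
    · have hiQ : F i ≤ Q := le_biSup F (Finset.mem_compl.2 his)
      exact his ((hs i).2 ((le_inf hi hiQ).trans (hCQ.le.trans inf_le_left)))
  have hAP : finrank L ↥(T ⊓ P) < finrank L P := by
    refine finrank_lt_finrank_of_lt (lt_of_le_of_ne inf_le_right fun h => hT j ?_)
    exact (le_biSup F hj).trans (h.symm.le.trans inf_le_left)
  have hwT₂ : wt U T₂ = wt U P + wt U (T₂ ⊓ Q) := hD.wt_eq_of_biSup_le hPT₂
  have hdT₂ : finrank L T₂ = finrank L P + finrank L ↥(T₂ ⊓ Q) := hD.finrank_eq_of_biSup_le hPT₂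
  have hsuper := wt_add_wt_le_wt_sup_add_wt_inf U T P
  have hmono := wt_mono U (sup_le hTT₂ hPT₂)
  have hdC : finrank L C = finrank L ↥(T ⊓ P) + finrank L ↥(T₂ ⊓ Q) + 1 :=
    finrank_sup_sup_span_add hPQ inf_le_right inf_le_right haP hbQ haA
  have hwC : wt U (T ⊓ P) + wt U (T₂ ⊓ Q) + 1 ≤ wt U C :=
    wt_sup_sup_span_add U hPQ inf_le_right inf_le_right haP hbQ haA
      (add_mem (hD.Us_le j haUs) (hD.Us_le j' hbUs))
  refine ⟨C, hC, ?_, by omega⟩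
  unfold defect
  omega

lemma sup_span_eq_top_or_exists_wt_lt (hD : IsDecomposition U Us F) {T : Submodule L V}
    (hT : ∀ i, ¬ F i ≤ T) {y : V} (hyU : y ∈ U) (hyT : y ∉ T) :
    T ⊔ span L {y} = ⊤ ∨
      ∃ C : Submodule L V, (∀ i, ¬ F i ≤ C) ∧ defect U T ≤ defect U C ∧ wt U T < wt U C := by
  have hrank := finrank_sup_span_singleton hyT
  have hwt := wt_add_one_le_wt_sup_span U hyU hyT
  by_cases hfree : ∀ i, ¬ F i ≤ T ⊔ span L {y}
  · exact Or.inr ⟨_, hfree, by unfold defect; omega, by omega⟩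
  push Not at hfree
  obtain ⟨i, hi⟩ := hfree
  classical
  set s := Finset.univ.filter fun i => F i ≤ T ⊔ span L {y}
  have hs : ∀ i, i ∈ s ↔ F i ≤ T ⊔ span L {y} := by simp [s]
  rcases sᶜ.eq_empty_or_nonempty with hsc | hsc
  · refine Or.inl (eq_top_iff.2 (hD.iSup_F ▸ iSup_le fun i => (hs i).1 ?_))
    simp [(Finset.compl_eq_empty_iff s).1 hsc]
  · exact Or.inr (hD.exists_wt_lt_of_le_of_finrank_eq_succ hT le_sup_left hrank hs
      ⟨i, (hs i).2 hi⟩ hsc)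

theorem defect_nonpos_of_wt_le (hD : IsDecomposition U Us F)
    (hhyp : ∀ H : Submodule L V, finrank L H + 1 = finrank L V → (∀ i, ¬ F i ≤ H) →
      wt U H ≤ finrank L H)
    {T : Submodule L V} (hT : ∀ i, ¬ F i ≤ T) : defect U T ≤ 0 := by
  induction hN : finrank K U - wt U T using Nat.strong_induction_on generalizing T with
  | _ N ih =>
  rcases isEmpty_or_nonempty ι with hι | ⟨⟨i⟩⟩
  · have hU : U = ⊥ := by rw [← hD.iSup_Us, iSup_of_empty]
    subst hU
    rw [defect, wt, bot_inf_eq, finrank_bot]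
    omega
  obtain ⟨y, hyUs, hyT⟩ := hD.exists_mem_notMem (hT i)
  rcases hD.sup_span_eq_top_or_exists_wt_lt hT (hD.Us_le i hyUs) hyT with htop | ⟨C, hC, hdC, hwC⟩
  · have hH : finrank L T + 1 = finrank L V := by
      rw [← finrank_sup_span_singleton hyT, htop, finrank_top]
    have := hhyp T hH hT
    unfold defect
    omega
  · have hCU : wt U C ≤ finrank K U := finrank_mono inf_le_left
    exact hdC.trans (ih _ (by omega) hC rfl)

lemma defect_le_defect_biSup (hD : IsDecomposition U Us F) (h0 : ∀ i, F i ≠ ⊥)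
    (hfree : ∀ T : Submodule L V, (∀ i, ¬ F i ≤ T) → defect U T ≤ 0)
    {T : Submodule L V} {s : Finset ι} (hs : ∀ i, i ∈ s ↔ F i ≤ T) :
    defect U T ≤ defect U (⨆ i ∈ s, F i) := by
  have hPT : ⨆ i ∈ s, F i ≤ T := iSup₂_le fun i hi => (hs i).1 hi
  have hQ : ∀ i, ¬ F i ≤ T ⊓ ⨆ i ∈ sᶜ, F i := by
    intro i hi
    have hP : F i ≤ ⨆ j ∈ s, F j := le_biSup F ((hs i).2 (hi.trans inf_le_left))
    exact h0 i (disjoint_self.1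
      ((hD.iSupIndep_F.disjoint_biSup_finset disjoint_compl_right).mono hP (hi.trans inf_le_right)))
  rw [hD.defect_eq_of_biSup_le hPT]
  linarith [hfree _ hQ]

theorem isMinimalWrtDefect_iff (hD : IsDecomposition U Us F)
    (hlt : ∀ i, finrank L (F i) < finrank K (Us i))
    (hfree : ∀ T : Submodule L V, (∀ i, ¬ F i ≤ T) → defect U T ≤ 0) (T : Submodule L V) :
    (0 < defect U T ∧ IsMinimalWrtDefect U T) ↔ ∃ s : Finset ι, s.Nonempty ∧ T = ⨆ j ∈ s, F j := by
  have h0 : ∀ i, F i ≠ ⊥ := fun i => hD.ne_bot (hlt i)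
  have hsupp : ∀ T : Submodule L V, ∃ s : Finset ι, ∀ i, i ∈ s ↔ F i ≤ T := fun T => by
    classical
    exact ⟨Finset.univ.filter (F · ≤ T), by simp⟩
  have hterm : ∀ i, 0 < (finrank K (Us i) : ℤ) - finrank L (F i) := fun i => by
    have := hlt i
    omega
  constructor
  · rintro ⟨hpos, hmin⟩
    obtain ⟨s, hs⟩ := hsupp T
    have hle := hD.defect_le_defect_biSup h0 hfree hs
    have hPT : ⨆ i ∈ s, F i ≤ T := iSup₂_le fun i hi => (hs i).1 hi
    refine ⟨s, Finset.nonempty_iff_ne_empty.2 ?_, ?_⟩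
    · rintro rfl
      rw [hD.defect_biSup, Finset.sum_empty] at hle
      omega
    · by_contra hne
      exact (hmin _ (lt_of_le_of_ne hPT (Ne.symm hne))).not_ge hle
  · rintro ⟨s, hsne, rfl⟩
    refine ⟨by rw [hD.defect_biSup]; exact Finset.sum_pos (fun i _ => hterm i) hsne,
      fun T' hT' => ?_⟩
    obtain ⟨s', hs'⟩ := hsupp T'
    have hsub : s' ⊆ s := fun i hi => hD.mem_of_le_biSup (h0 i) (((hs' i).1 hi).trans hT'.le)
    have hne : s' ≠ s := by
      rintro rfl
      exact hT'.not_ge (iSup₂_le fun i hi => (hs' i).1 hi)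
    obtain ⟨j, hjs, hjs'⟩ := Finset.exists_of_ssubset (hsub.ssubset_of_ne hne)
    calc defect U T' ≤ defect U (⨆ i ∈ s', F i) := hD.defect_le_defect_biSup h0 hfree hs'
      _ < defect U (⨆ i ∈ s, F i) := by
        rw [hD.defect_biSup, hD.defect_biSup]
        exact Finset.sum_lt_sum_of_subset hsub hjs hjs' (hterm j) fun i _ _ => (hterm i).le

theorem scattered_iff_forall_defect_nonpos (hD : IsDecomposition U Us F)
    (hlt : ∀ i, finrank L (F i) < finrank K (Us i)) :
    ((∀ i, ∀ H : Submodule L V, H ≤ F i → finrank L H + 1 = finrank L (F i) →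
          finrank K ↥(Us i ⊓ H.restrictScalars K) ≤ finrank L (F i) - 1) ∧
      (∀ H : Submodule L V, finrank L H + 1 = finrank L V →
          (∀ i, ¬ F i ≤ H) → wt U H ≤ finrank L V - 1)) ↔
      ∀ T : Submodule L V, (∀ i, ¬ F i ≤ T) → defect U T ≤ 0 := by
  constructor
  · rintro ⟨-, hhyp⟩ T hT
    exact hD.defect_nonpos_of_wt_le (fun H hH hHF => by have := hhyp H hH hHF; omega) hT
  · intro hfree
    refine ⟨fun i H hHF hH => ?_, fun H hH hHF => ?_⟩
    · have hFH : ¬ F i ≤ H := fun h => by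
        have := finrank_mono h
        omega
      have hdef := hfree H (hD.forall_not_le_of_le (fun j => hD.ne_bot (hlt j)) hHF hFH)
      have hwt : finrank K ↥(Us i ⊓ H.restrictScalars K) ≤ wt U H :=
        finrank_mono (inf_le_inf_right _ (hD.Us_le i))
      unfold defect at hdef
      omega
    · have hdef := hfree H hHF
      unfold defect at hdef
      omega

end IsDecomposition

theorem statement5_general {K L V : Type*} [Field K] [Field L] [Algebra K L]
    [Fintype L]
    [AddCommGroup V] [Module K V] [Module L V] [IsScalarTower K L V]
    [FiniteDimensional L V]
    (t : ℕ) (ks ns : Fin t → ℕ)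
    (hns : ∀ i, ks i < ns i)
    (k : ℕ)
    (hkV : Module.finrank L V = k)
    (U : Submodule K V)
    (Us : Fin t → Submodule K V)
    (hUindep : iSupIndep Us) (hUsup : (⨆ i, Us i) = U)
    (hUdim : ∀ i, Module.finrank K ↥(Us i) = ns i)
    (F : Fin t → Submodule L V)
    (hF : ∀ i, F i = Submodule.span L ((Us i : Set V)))
    (hFindep : iSupIndep F) (hFsup : (⨆ i, F i) = ⊤)
    (hFdim : ∀ i, Module.finrank L ↥(F i) = ks i) :
    -- `U` is `𝐤`-scattered w.r.t. the hyperplanes (for this decomposition) iff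
    -- the subspaces of positive defect that are minimal w.r.t. their defect are
    -- exactly the sums of some of the components `F_i`.
    (((∀ i, ∀ H : Submodule L V, H ≤ F i → Module.finrank L ↥H + 1 = ks i →
          Module.finrank K ↥(Us i ⊓ H.restrictScalars K) ≤ ks i - 1) ∧
      (∀ H : Submodule L V, Module.finrank L ↥H + 1 = k →
          (∀ i, ¬ F i ≤ H) → wt U H ≤ k - 1)) ↔
      (∀ T : Submodule L V,
        (0 < defect U T ∧ IsMinimalWrtDefect U T) ↔
          ∃ s : Finset (Fin t), s.Nonempty ∧ T = ⨆ j ∈ s, F j)) := by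
  have : FiniteDimensional K V := Module.Finite.trans L V
  have hD : IsDecomposition U Us F := ⟨hF, hFindep, hFsup, hUindep, hUsup⟩
  have hlt : ∀ i, finrank L (F i) < finrank K (Us i) := fun i => hFdim i ▸ hUdim i ▸ hns i
  subst hkV
  simp only [← hFdim]
  rw [hD.scattered_iff_forall_defect_nonpos hlt]
  exact ⟨fun hfree T => hD.isMinimalWrtDefect_iff hlt hfree T,
    fun h T hT => defect_nonpos_of_isMinimalWrtDefect U (fun T => (h T).1) hT⟩

/-- Theorem 1.21: characterization of `𝐤`-scattered subspaces w.r.t. the hyperplanes. -/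
theorem statement5 {K L V : Type*} [Field K] [Field L] [Algebra K L]
    [Fintype K] [Fintype L]
    [AddCommGroup V] [Module K V] [Module L V] [IsScalarTower K L V]
    [FiniteDimensional L V]
    (m : ℕ) (hm : 0 < m) (hmL : Module.finrank K L = m)
    (t : ℕ) (ht : 0 < t) (ks ns : Fin t → ℕ)
    (hks : ∀ i, 0 < ks i) (hns : ∀ i, ks i < ns i)
    (k n : ℕ) (hk : k = ∑ i, ks i) (hn : n = ∑ i, ns i)
    (hkV : Module.finrank L V = k)
    (U : Submodule K V) (hUn : Module.finrank K ↥U = n)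
    (Us : Fin t → Submodule K V)
    (hUindep : iSupIndep Us) (hUsup : (⨆ i, Us i) = U)
    (hUdim : ∀ i, Module.finrank K ↥(Us i) = ns i)
    (F : Fin t → Submodule L V)
    (hF : ∀ i, F i = Submodule.span L ((Us i : Set V)))
    (hFindep : iSupIndep F) (hFsup : (⨆ i, F i) = ⊤)
    (hFdim : ∀ i, Module.finrank L ↥(F i) = ks i) :
    -- `U` is `𝐤`-scattered w.r.t. the hyperplanes (for this decomposition) iff
    -- the subspaces of positive defect that are minimal w.r.t. their defect are
    -- exactly the sums of some of the components `F_i`.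
    (((∀ i, ∀ H : Submodule L V, H ≤ F i → Module.finrank L ↥H + 1 = ks i →
          Module.finrank K ↥(Us i ⊓ H.restrictScalars K) ≤ ks i - 1) ∧
      (∀ H : Submodule L V, Module.finrank L ↥H + 1 = k →
          (∀ i, ¬ F i ≤ H) → wt U H ≤ k - 1)) ↔
      (∀ T : Submodule L V,
        (0 < defect U T ∧ IsMinimalWrtDefect U T) ↔
          ∃ s : Finset (Fin t), s.Nonempty ∧ T = ⨆ j ∈ s, F j)) :=
  statement5_general t ks ns hns k hkV U Us hUindep hUsup hUdim F hF hFindep hFsup hFdim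
end

section
/- Let W be an n-dimensional 𝔽_q-subgeometry of an n-dimensional 𝔽_{q^m}-vector space 𝕍(n,q^m) and let Γ be an (n−k)-dimensional 𝔽_{q^m}-subspace of 𝕍(n,q^m) with Γ ∩ W = {0}. Let U = (W+Γ)/Γ in 𝕍(k,q^m) = 𝕍(n,q^m)/Γ. Then for every 𝔽_{q^m}-subspace T of 𝕍(k,q^m) with w_U(T) = h and ⟨T ∩ U⟩_{𝔽_{q^m}} = T, the following hold: (1) T = (S_h* + Γ)/Γ for some h-dimensional 𝔽_q-subspace S_h of W (where S_h* = ⟨S_h⟩_{𝔽_{q^m}}); in particular 𝕍(k,q^m) = (W* + Γ)/Γ; (2) ε_U(T) = dim_{𝔽_{q^m}}(S_h* ∩ Γ); (3) if T' is an 𝔽_{q^m}-subspace of 𝕍(k,q^m) with T' ⊆ T, ⟨T' ∩ U⟩_{𝔽_{q^m}} = T' and T' = (S_{h'}* + Γ)/Γ for an 𝔽_q-subspace S_{h'} of W, then S_{h'} ⊆ S_h. -/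
/-!
Since `Γ` meets `W` trivially, the projection `Vn → Vn ⧸ Γ` is injective on `W`, so it maps the
`𝔽_q`-subspaces of `W` isomorphically onto those of `U`. The preimage in `W` of `U ∩ T` is then the
`S_h` of (1), and any `S ≤ W` with `dim S = w_U(T)` representing `T` must map onto `U ∩ T`, which
gives (3). As `W` is a subgeometry, `dim_{𝔽_{q^m}} S* = dim_{𝔽_q} S` for every `S ≤ W`, and (2) is
rank–nullity for the projection `S* → T` with kernel `S* ∩ Γ`.
-/

open Module Submodule

namespace LinearMap
variable {K M N : Type*} [Field K] [AddCommGroup M] [Module K M] [AddCommGroup N] [Module K N]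

theorem finrank_map_of_disjoint_ker (f : M →ₗ[K] N) {S : Submodule K M}
    (h : Disjoint S (ker f)) : finrank K (S.map f) = finrank K S := by
  rw [← range_domRestrict, finrank_range_of_inj (injective_domRestrict_iff.mpr h)]

theorem finrank_map_add_finrank_inf_ker [FiniteDimensional K M] (f : M →ₗ[K] N)
    (P : Submodule K M) : finrank K (P.map f) + finrank K ↥(P ⊓ ker f) = finrank K P := by
  have := finrank_range_add_finrank_ker (f.domRestrict P)
  rwa [range_domRestrict, ker_domRestrict, ← finrank_map_subtype_eq, map_comap_subtype] at this

end LinearMap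

namespace Submodule
variable {K L V : Type*} [Field K] [Field L] [Algebra K L]
    [AddCommGroup V] [Module K V] [Module L V] [IsScalarTower K L V]

theorem finrank_span_le_finrank (S : Submodule K V) [Module.Finite K S] :
    finrank L (span L (S : Set V)) ≤ finrank K S := by
  let b := Module.finBasis K S
  have hspan : span L (S : Set V) = span L (Set.range (S.subtype ∘ b)) := by
    rw [← span_span_of_tower K L (Set.range _), Set.range_comp, ← map_span, b.span_eq,
      Submodule.map_top, range_subtype]
  rw [hspan]
  exact (finrank_range_le_card (R := L) (S.subtype ∘ b)).trans_eq (Fintype.card_fin _)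

theorem span_sup_of_tower (S S' : Submodule K V) :
    span L ((S ⊔ S' : Submodule K V) : Set V) = span L (S : Set V) ⊔ span L (S' : Set V) := by
  rw [← span_union, ← span_span_of_tower K L (_ ∪ _), span_union, span_eq, span_eq]

theorem finrank_span_eq_finrank_of_le [FiniteDimensional L V] {W S : Submodule K V}
    [Module.Finite K W] (hW : finrank L (span L (W : Set V)) = finrank K W) (hS : S ≤ W) :
    finrank L (span L (S : Set V)) = finrank K S := by
  obtain ⟨⟨S', hS'W⟩, hcompl⟩ := ComplementedLattice.exists_isCompl (α := Set.Iic W) ⟨S, hS⟩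
  have hsup : S ⊔ S' = W := congrArg Subtype.val hcompl.sup_eq_top
  have hinf : S ⊓ S' = ⊥ := congrArg Subtype.val hcompl.inf_eq_bot
  have : Module.Finite K S := finiteDimensional_of_le hS
  have : Module.Finite K S' := finiteDimensional_of_le hS'W
  have hdimW := finrank_sup_add_finrank_inf_eq S S'
  rw [hsup, hinf, finrank_bot] at hdimW
  have hspanW := finrank_add_le_finrank_add_finrank (span L (S : Set V)) (span L (S' : Set V))
  rw [← span_sup_of_tower, hsup, hW] at hspanW
  have hspanS := S.finrank_span_le_finrank (L := L)
  have hspanS' := S'.finrank_span_le_finrank (L := L)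
  omega

section Projection
variable {Γ : Submodule L V} {W : Submodule K V}

theorem disjoint_ker_mkQ_of_le (hΓW : Γ.restrictScalars K ⊓ W = ⊥) {S : Submodule K V}
    (hS : S ≤ W) : Disjoint S (LinearMap.ker (Γ.mkQ.restrictScalars K)) := by
  rw [LinearMap.ker_restrictScalars, ker_mkQ, disjoint_comm, disjoint_iff]
  exact eq_bot_mono (inf_le_inf_left _ hS) hΓW

theorem map_mkQ_le_map_mkQ_iff (hΓW : Γ.restrictScalars K ⊓ W = ⊥) {S S' : Submodule K V}
    (hS : S ≤ W) (hS' : S' ≤ W) :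
    S.map (Γ.mkQ.restrictScalars K) ≤ S'.map (Γ.mkQ.restrictScalars K) ↔ S ≤ S' := by
  have hinj := LinearMap.injOn_of_disjoint_ker subset_rfl (disjoint_ker_mkQ_of_le hΓW le_rfl)
  rw [← SetLike.coe_subset_coe, map_coe, map_coe, hinj.image_subset_image_iff hS hS']
  rfl

theorem finrank_map_mkQ_of_le (hΓW : Γ.restrictScalars K ⊓ W = ⊥) {S : Submodule K V}
    (hS : S ≤ W) : finrank K (S.map (Γ.mkQ.restrictScalars K)) = finrank K S :=
  LinearMap.finrank_map_of_disjoint_ker _ (disjoint_ker_mkQ_of_le hΓW hS)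

theorem map_mkQ_span (S : Submodule K V) :
    (span L (S : Set V)).map Γ.mkQ =
      span L ((S.map (Γ.mkQ.restrictScalars K) : Submodule K (V ⧸ Γ)) : Set (V ⧸ Γ)) := by
  rw [map_span, map_coe]
  rfl

theorem map_mkQ_inf_comap (T : Submodule L (V ⧸ Γ)) :
    (W ⊓ (T.restrictScalars K).comap (Γ.mkQ.restrictScalars K)).map (Γ.mkQ.restrictScalars K) =
      W.map (Γ.mkQ.restrictScalars K) ⊓ T.restrictScalars K :=
  SetLike.coe_injective (Set.image_inter_preimage _ _ _)

theorem map_mkQ_eq_inf_of_finrank_eq_wt [Module.Finite K W] (hΓW : Γ.restrictScalars K ⊓ W = ⊥)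
    {T : Submodule L (V ⧸ Γ)} {S : Submodule K V} (hS : S ≤ W)
    (hST : T = (span L (S : Set V)).map Γ.mkQ)
    (hdim : finrank K S = wt (W.map (Γ.mkQ.restrictScalars K)) T) :
    S.map (Γ.mkQ.restrictScalars K) = W.map (Γ.mkQ.restrictScalars K) ⊓ T.restrictScalars K := by
  refine eq_of_le_of_finrank_le (le_inf (map_mono hS) ?_) ?_
  · rw [map_le_iff_le_comap]
    intro x hx
    rw [hST]
    exact mem_map_of_mem (subset_span hx)
  · rw [finrank_map_mkQ_of_le hΓW hS, hdim, wt]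

end Projection

end Submodule

theorem statement6_general {K L Vn : Type*} [Field K] [Field L] [Algebra K L]
    [AddCommGroup Vn] [Module K Vn] [Module L Vn] [IsScalarTower K L Vn]
    [FiniteDimensional L Vn]
    (n k : ℕ) (hkn : k < n)
    (hVn : Module.finrank L Vn = n)
    -- `W` is an `n`-dimensional `𝔽_q`-subgeometry of `𝕍(n,q^m)`
    (W : Submodule K Vn) (hW : Module.finrank K ↥W = n)
    (hWstar : Module.finrank L ↥(Submodule.span L (W : Set Vn)) = n)
    -- `Γ` is an `(n−k)`-dimensional `𝔽_{q^m}`-subspace with `Γ ∩ W = 0`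
    (Γ : Submodule L Vn)
    (hΓW : Γ.restrictScalars K ⊓ W = ⊥)
    -- `U = (W + Γ)/Γ`
    (U : Submodule K (Vn ⧸ Γ)) (hU : U = Submodule.map (Γ.mkQ.restrictScalars K) W)
    -- a subspace `T` of `𝕍(k,q^m)` with `w_U(T) = h` and `⟨T ∩ U⟩_{𝔽_{q^m}} = T`
    (T : Submodule L (Vn ⧸ Γ)) (h : ℕ) (hwT : wt U T = h)
    (hTspan : Submodule.span L
      ((U ⊓ T.restrictScalars K : Submodule K (Vn ⧸ Γ)) : Set (Vn ⧸ Γ)) = T) :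
    -- (1) `T = (S_h* + Γ)/Γ` with `S_h ≤ W` of dimension `h`; and `𝕍(k,q^m) = (W* + Γ)/Γ`
    ((∃ S : Submodule K Vn, S ≤ W ∧ Module.finrank K ↥S = h ∧
        T = Submodule.map Γ.mkQ (Submodule.span L (S : Set Vn))) ∧
      Submodule.map Γ.mkQ (Submodule.span L (W : Set Vn)) = ⊤) ∧
    -- (2) `ε_U(T) = dim_{𝔽_{q^m}}(S_h* ∩ Γ)`
    (∀ S : Submodule K Vn, S ≤ W → Module.finrank K ↥S = h →
      T = Submodule.map Γ.mkQ (Submodule.span L (S : Set Vn)) →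
      defect U T = Module.finrank L ↥(Submodule.span L (S : Set Vn) ⊓ Γ)) ∧
    -- (3) if `T' ⊆ T` is likewise represented by `S' ≤ W`, then `S' ⊆ S_h`
    (∀ T' : Submodule L (Vn ⧸ Γ), T' ≤ T →
      Submodule.span L
        ((U ⊓ T'.restrictScalars K : Submodule K (Vn ⧸ Γ)) : Set (Vn ⧸ Γ)) = T' →
      ∀ S' : Submodule K Vn, S' ≤ W → Module.finrank K ↥S' = wt U T' →
        T' = Submodule.map Γ.mkQ (Submodule.span L (S' : Set Vn)) →
      ∀ S : Submodule K Vn, S ≤ W → Module.finrank K ↥S = h →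
        T = Submodule.map Γ.mkQ (Submodule.span L (S : Set Vn)) →
        S' ≤ S) := by
  subst hU
  have : Module.Finite K W := Module.finite_of_finrank_pos (hW ▸ Nat.zero_lt_of_lt hkn)
  have hspanW : span L (W : Set Vn) = ⊤ := eq_top_of_finrank_eq (by rw [hWstar, hVn])
  refine ⟨⟨?_, by rw [hspanW, Submodule.map_top, range_mkQ]⟩, ?_, ?_⟩
  · refine ⟨W ⊓ (T.restrictScalars K).comap (Γ.mkQ.restrictScalars K), inf_le_left, ?_, ?_⟩
    · rw [← finrank_map_mkQ_of_le hΓW inf_le_left, map_mkQ_inf_comap, ← hwT, wt]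
    · rw [map_mkQ_span, map_mkQ_inf_comap, hTspan]
  · intro S hSW hSdim hST
    have hrank := Γ.mkQ.finrank_map_add_finrank_inf_ker (span L (S : Set Vn))
    rw [← hST, ker_mkQ, finrank_span_eq_finrank_of_le (by rw [hWstar, hW]) hSW, hSdim] at hrank
    rw [defect, hwT]
    omega
  · intro T' hT'T _ S' hS'W hS'dim hS'T S hSW hSdim hST
    rw [← map_mkQ_le_map_mkQ_iff hΓW hS'W hSW,
      map_mkQ_eq_inf_of_finrank_eq_wt hΓW hS'W hS'T hS'dim,
      map_mkQ_eq_inf_of_finrank_eq_wt hΓW hSW hST (hSdim.trans hwT.symm)]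
    exact inf_le_inf_left _ hT'T

/-- Proposition 1.24: weights and defects in the quotient (projection of a
subgeometry) model. Here `U = (W + Γ)/Γ` inside `𝕍(k,q^m) = 𝕍(n,q^m)/Γ`. -/
theorem statement6 {K L Vn : Type*} [Field K] [Field L] [Algebra K L]
    [Fintype K] [Fintype L]
    [AddCommGroup Vn] [Module K Vn] [Module L Vn] [IsScalarTower K L Vn]
    [FiniteDimensional L Vn]
    (m n k : ℕ) (hm : 0 < m) (hk : 0 < k) (hkn : k < n)
    (hmL : Module.finrank K L = m) (hVn : Module.finrank L Vn = n)
    -- `W` is an `n`-dimensional `𝔽_q`-subgeometry of `𝕍(n,q^m)`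
    (W : Submodule K Vn) (hW : Module.finrank K ↥W = n)
    (hWstar : Module.finrank L ↥(Submodule.span L (W : Set Vn)) = n)
    -- `Γ` is an `(n−k)`-dimensional `𝔽_{q^m}`-subspace with `Γ ∩ W = 0`
    (Γ : Submodule L Vn) (hΓ : Module.finrank L ↥Γ = n - k)
    (hΓW : Γ.restrictScalars K ⊓ W = ⊥)
    -- `U = (W + Γ)/Γ`
    (U : Submodule K (Vn ⧸ Γ)) (hU : U = Submodule.map (Γ.mkQ.restrictScalars K) W)
    -- a subspace `T` of `𝕍(k,q^m)` with `w_U(T) = h` and `⟨T ∩ U⟩_{𝔽_{q^m}} = T`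
    (T : Submodule L (Vn ⧸ Γ)) (h : ℕ) (hwT : wt U T = h)
    (hTspan : Submodule.span L
      ((U ⊓ T.restrictScalars K : Submodule K (Vn ⧸ Γ)) : Set (Vn ⧸ Γ)) = T) :
    -- (1) `T = (S_h* + Γ)/Γ` with `S_h ≤ W` of dimension `h`; and `𝕍(k,q^m) = (W* + Γ)/Γ`
    ((∃ S : Submodule K Vn, S ≤ W ∧ Module.finrank K ↥S = h ∧
        T = Submodule.map Γ.mkQ (Submodule.span L (S : Set Vn))) ∧
      Submodule.map Γ.mkQ (Submodule.span L (W : Set Vn)) = ⊤) ∧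
    -- (2) `ε_U(T) = dim_{𝔽_{q^m}}(S_h* ∩ Γ)`
    (∀ S : Submodule K Vn, S ≤ W → Module.finrank K ↥S = h →
      T = Submodule.map Γ.mkQ (Submodule.span L (S : Set Vn)) →
      defect U T = Module.finrank L ↥(Submodule.span L (S : Set Vn) ⊓ Γ)) ∧
    -- (3) if `T' ⊆ T` is likewise represented by `S' ≤ W`, then `S' ⊆ S_h`
    (∀ T' : Submodule L (Vn ⧸ Γ), T' ≤ T →
      Submodule.span L
        ((U ⊓ T'.restrictScalars K : Submodule K (Vn ⧸ Γ)) : Set (Vn ⧸ Γ)) = T' →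
      ∀ S' : Submodule K Vn, S' ≤ W → Module.finrank K ↥S' = wt U T' →
        T' = Submodule.map Γ.mkQ (Submodule.span L (S' : Set Vn)) →
      ∀ S : Submodule K Vn, S ≤ W → Module.finrank K ↥S = h →
        T = Submodule.map Γ.mkQ (Submodule.span L (S : Set Vn)) →
        S' ≤ S) :=
  statement6_general n k hkn hVn W hW hWstar Γ hΓW U hU T h hwT hTspan
end

section
/- Let h+1 divide km, let m ≥ h+2, and let U be a maximum h-scattered 𝔽_q-subspace of a k-dimensional 𝔽_{q^m}-vector space 𝕍(k,q^m), i.e. U is h-scattered with dim_{𝔽_q}(U) = km/(h+1). Then a Delsarte dual U^d of U is a maximum (m−h−2)-scattered 𝔽_q-subspace of the (km/(h+1) − k)-dimensional 𝔽_{q^m}-vector space 𝕍(km/(h+1)−k, q^m), i.e. U^d is (m−h−2)-scattered with dim_{𝔽_q}(U^d) = km/(h+1). -/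
open Module Submodule

section Scattered

variable {K L Q : Type*} [Field K] [Field L] [Algebra K L]
  [AddCommGroup Q] [Module K Q] [Module L Q] [IsScalarTower K L Q]

def IsScattered (L : Type*) [Field L] [Algebra K L] [Module L Q] [IsScalarTower K L Q]
    (U : Submodule K Q) (h : ℕ) : Prop :=
  ∀ T : Submodule L Q, finrank L T = h → wt U T ≤ h

def smulSum {ι : Type*} [Fintype ι] (ζ : ι → L) (U : Submodule K Q) : (ι → U) →ₗ[K] Q where
  toFun f := ∑ i, ζ i • (f i : Q)
  map_add' f g := by simp [smul_add, Finset.sum_add_distrib]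
  map_smul' c f := by simp [Finset.smul_sum, smul_comm c]

variable [FiniteDimensional K L] [FiniteDimensional L Q] {U : Submodule K Q} {h : ℕ}

theorem IsScattered.wt_le_finrank (hU : IsScattered L U h) (hspan : span L (U : Set Q) = ⊤)
    (hhQ : h ≤ finrank L Q) (P : Submodule L Q) (hP : finrank L P ≤ h) :
    wt U P ≤ finrank L P := by
  have := Module.Finite.trans L Q (R := K)
  induction hd : h - finrank L P generalizing P with
  | zero => exact (show finrank L P = h by omega) ▸ hU P (by omega)
  | succ d ih =>
    obtain ⟨u, huU, huP⟩ : ∃ u ∈ U, u ∉ P := by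
      by_contra! hUP
      have hP_top : P = ⊤ := eq_top_iff.2 (hspan ▸ span_le.2 hUP)
      rw [hP_top, finrank_top] at hd
      omega
    have hP' := finrank_sup_span_singleton huP
    have hlt : U ⊓ P.restrictScalars K < U ⊓ (P ⊔ L ∙ u).restrictScalars K :=
      lt_of_le_of_ne (inf_le_inf_left _ (restrictScalars_mono K le_sup_left)) fun heq =>
        huP (heq ▸ ⟨huU, mem_sup_right (mem_span_singleton_self u)⟩ : u ∈ U ⊓ P.restrictScalars K).2
    have := finrank_lt_finrank_of_lt hlt
    have := ih (P ⊔ L ∙ u) (by omega) (by omega)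
    unfold wt at *
    omega

theorem IsScattered.linearIndependent {ι : Type*} [Fintype ι] (hU : IsScattered L U h)
    (hspan : span L (U : Set Q) = ⊤) (hhQ : h ≤ finrank L Q) {x : ι → Q} (hxU : ∀ i, x i ∈ U)
    (hx : LinearIndependent K x) (hcard : Fintype.card ι ≤ h + 1) : LinearIndependent L x := by
  have := Module.Finite.trans L Q (R := K)
  rw [linearIndependent_iff_card_le_finrank_span, Set.finrank]
  by_contra! hlt
  have hwt := hU.wt_le_finrank hspan hhQ (span L (Set.range x)) (by omega)
  have hle : span K (Set.range x) ≤ U ⊓ (span L (Set.range x)).restrictScalars K :=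
    le_inf (span_le.2 (Set.range_subset_iff.2 hxU)) (span_le_restrictScalars K L _)
  have := finrank_mono hle
  rw [finrank_span_eq_card hx] at this
  unfold wt at hwt
  omega

theorem IsScattered.eq_zero_of_sum_smul_eq_zero {ι : Type*} [Fintype ι] (hU : IsScattered L U h)
    (hspan : span L (U : Set Q) = ⊤) (hhQ : h ≤ finrank L Q) {ζ : ι → L}
    (hζ : LinearIndependent K ζ) {x : ι → Q} (hxU : ∀ i, x i ∈ U)
    (hcard : Fintype.card ι ≤ h + 1) (hsum : ∑ i, ζ i • x i = 0) (i : ι) : x i = 0 := by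
  have := Module.Finite.trans L Q (R := K)
  set S := span K (Set.range x)
  let b := finBasis K S
  have hbU : ∀ j, (b j : Q) ∈ U := fun j => span_le.2 (Set.range_subset_iff.2 hxU) (b j).2
  have hbL : LinearIndependent L fun j => (b j : Q) :=
    hU.linearIndependent hspan hhQ hbU (b.linearIndependent.map' S.subtype S.ker_subtype)
      (by rw [Fintype.card_fin]; exact (finrank_range_le_card x).trans hcard)
  have hx : ∀ i, x i = ∑ j, b.repr ⟨x i, subset_span ⟨i, rfl⟩⟩ j • (b j : Q) := fun i => by
    have := congrArg S.subtype (b.sum_repr ⟨x i, subset_span ⟨i, rfl⟩⟩)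
    simp only [map_sum, map_smul, coe_subtype] at this
    exact this.symm
  have hc := Fintype.linearIndependent_iff.1 (linearIndependent_smul hζ hbL)
    (fun p => b.repr ⟨x p.1, subset_span ⟨p.1, rfl⟩⟩ p.2) (by
      rw [Fintype.sum_prod_type, ← hsum]
      refine Finset.sum_congr rfl fun i _ => ?_
      rw [hx i, Finset.smul_sum]
      exact Finset.sum_congr rfl fun j _ => smul_comm _ _ _)
  rw [hx i]
  simp [fun j => hc (i, j)]

theorem IsScattered.smulSum_surjective (hU : IsScattered L U h)
    (hspan : span L (U : Set Q) = ⊤) (hhQ : h ≤ finrank L Q) {ζ : Fin (h + 1) → L}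
    (hζ : LinearIndependent K ζ) (hdim : (h + 1) * finrank K U = finrank K Q) :
    Function.Surjective (smulSum ζ U) := by
  have := Module.Finite.trans L Q (R := K)
  refine (LinearMap.injective_iff_surjective_of_finrank_eq_finrank ?_).1 ?_
  · simpa [Module.finrank_pi_fintype] using hdim
  · rw [← LinearMap.ker_eq_bot, LinearMap.ker_eq_bot']
    intro f hf
    funext i
    exact Subtype.ext (hU.eq_zero_of_sum_smul_eq_zero hspan hhQ hζ (fun i => (f i).2)
      (by simp) hf i)

theorem isScattered_of_forall_linearIndependent
    (hU : ∀ x : Fin (h + 1) → Q, (∀ i, x i ∈ U) → LinearIndependent K x → LinearIndependent L x) :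
    IsScattered L U h := by
  have := Module.Finite.trans L Q (R := K)
  intro T hT
  by_contra! hlt
  obtain ⟨x, hx⟩ := exists_linearIndependent_of_le_finrank (R := K)
    (M := ↥(U ⊓ T.restrictScalars K)) (n := h + 1) hlt
  have hxL := hU (fun i => x i) (fun i => (x i).2.1) (hx.map' _ (ker_subtype _))
  have hspanT : span L (Set.range fun i => (x i : Q)) ≤ T :=
    span_le.2 (Set.range_subset_iff.2 fun i => (x i).2.2)
  have := finrank_mono hspanT
  rw [finrank_span_eq_card hxL, Fintype.card_fin] at this
  omega

theorem isScattered_map_of_linearIndependent_comp {V : Type*} [AddCommGroup V] [Module K V]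
    [Module L V] [IsScalarTower K L V] (f : V →ₗ[L] Q) {W : Submodule K V} {r : ℕ}
    (hf : ∀ w : Fin (r + 1) → V, (∀ i, w i ∈ W) → LinearIndependent K w →
      LinearIndependent L (f ∘ w)) :
    IsScattered L (W.map (f.restrictScalars K)) r := by
  refine isScattered_of_forall_linearIndependent fun x hxW hx => ?_
  choose w hwW hwx using hxW
  obtain rfl : x = f ∘ w := funext fun i => (hwx i).symm
  exact hf w hwW (hx.of_comp (f.restrictScalars K))

end Scattered

def IsSubgeometry (L : Type*) {K V : Type*} [Field K] [Field L] [Algebra K L]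
    [AddCommGroup V] [Module K V] [Module L V] [IsScalarTower K L V] (W : Submodule K V) : Prop :=
  finrank K W = finrank L (span L (W : Set V))

theorem IsSubgeometry.linearIndependent {K L V : Type*} [Field K] [Field L] [Algebra K L]
    [AddCommGroup V] [Module K V] [Module L V] [IsScalarTower K L V]
    [FiniteDimensional K L] [FiniteDimensional L V] {W : Submodule K V} (hW : IsSubgeometry L W)
    {ι : Type*} {v : ι → V} (hvW : ∀ i, v i ∈ W) (hv : LinearIndependent K v) :
    LinearIndependent L v := by
  have := Module.Finite.trans L V (R := K)
  have hs := hv.linearIndepOn_id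
  have hsW : Set.range v ⊆ W := Set.range_subset_iff.2 hvW
  set b := hs.extend hsW
  have hb : LinearIndepOn K id b := hs.linearIndepOn_extend hsW
  have : Finite b := hb.finite
  have := Fintype.ofFinite b
  have hbK : span K b = W := by rw [hs.span_extend_eq_span, span_eq]
  have hbL : span L b = span L (W : Set V) :=
    le_antisymm (span_mono (hs.extend_subset hsW))
      (span_le.2 ((hs.subset_span_extend hsW).trans (span_le_restrictScalars K L b)))
  have hbL' : LinearIndepOn L id b := by
    refine linearIndependent_iff_card_le_finrank_span.2 ?_
    have hr : (Set.range fun x : b => id (x : V)) = b := Subtype.range_coe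
    rw [Set.finrank, hr, hbL, ← hW, ← hbK, finrank_span_set_eq_card hb, Set.toFinset_card]
  exact LinearIndependent.of_linearIndepOn_id_range hv.injective (hbL'.mono (hs.subset_extend hsW))

theorem exists_linearIndependent_trace_mul_eq_zero {K L : Type*} [Field K] [Field L]
    [Algebra K L] [FiniteDimensional K L] [Algebra.IsSeparable K L] (Z : Submodule K L) {d : ℕ}
    (hd : finrank K Z + d ≤ finrank K L) :
    ∃ ζ : Fin d → L, LinearIndependent K ζ ∧ ∀ i, ∀ z ∈ Z, Algebra.trace K L (ζ i * z) = 0 := by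
  set Z' := LinearMap.BilinForm.orthogonal (Algebra.traceForm K L) Z
  obtain ⟨ζ, hζ⟩ := exists_linearIndependent_of_le_finrank (R := K) (M := Z') (n := d) (by
    rw [LinearMap.BilinForm.finrank_orthogonal (traceForm_nondegenerate K L)]
    omega)
  refine ⟨fun i => ζ i, hζ.map' Z'.subtype Z'.ker_subtype, fun i z hz => ?_⟩
  rw [mul_comm]
  exact (ζ i).2 z hz

section Delsarte

variable {K L V : Type*} [Field K] [Field L] [Algebra K L]
  [AddCommGroup V] [Module K V] [Module L V] [IsScalarTower K L V]
  {σ : V →ₗ[L] V →ₗ[L] L} {W : Submodule K V} {Γ : Submodule L V}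

theorem eq_zero_of_mem_orthogonal_of_trace_eq_zero [FiniteDimensional K L]
    [Algebra.IsSeparable K L] (hσ : σ.SeparatingRight) {ι : Type*} [Fintype ι] {ζ : ι → L}
    (hsurj : Function.Surjective (smulSum ζ (W.map (Γ.mkQ.restrictScalars K))))
    {v : V} (hv : v ∈ LinearMap.BilinForm.orthogonal σ Γ)
    (hζv : ∀ i, ∀ w ∈ W, Algebra.trace K L (ζ i * σ w v) = 0) : v = 0 := by
  have hΓ : Γ ≤ LinearMap.ker (σ.flip v) := fun γ hγ => hv γ hγ
  let G : (V ⧸ Γ) →ₗ[K] K := Algebra.trace K L ∘ₗ (Γ.liftQ (σ.flip v) hΓ).restrictScalars K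
  have hG : ∀ q, G q = 0 := by
    intro q
    obtain ⟨f, rfl⟩ := hsurj q
    simp only [smulSum, LinearMap.coe_mk, AddHom.coe_mk, map_sum]
    refine Finset.sum_eq_zero fun i _ => ?_
    obtain ⟨w, hw, hwf⟩ := (f i).2
    rw [← hwf]
    simpa [G] using hζv i w hw
  refine hσ v fun x => (traceForm_nondegenerate K L).2 _ fun θ => ?_
  simpa [G] using hG (Γ.mkQ (θ • x))

variable [FiniteDimensional K L] [Algebra.IsSeparable K L] [FiniteDimensional L V] {h : ℕ}

theorem eq_zero_of_sum_smul_mem_orthogonal (hσ : σ.SeparatingRight)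
    (hσW : ∀ x ∈ W, ∀ y ∈ W, σ x y ∈ (algebraMap K L).range)
    (hU : IsScattered L (W.map (Γ.mkQ.restrictScalars K)) h)
    (hspan : span L (W.map (Γ.mkQ.restrictScalars K) : Set (V ⧸ Γ)) = ⊤)
    (hhQ : h ≤ finrank L (V ⧸ Γ))
    (hdim : (h + 1) * finrank K (W.map (Γ.mkQ.restrictScalars K)) = finrank K (V ⧸ Γ))
    {ι : Type*} [Fintype ι] (hcard : Fintype.card ι + (h + 1) ≤ finrank K L)
    (μ : ι → L) {w : ι → V} (hwW : ∀ i, w i ∈ W)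
    (hv : ∑ i, μ i • w i ∈ LinearMap.BilinForm.orthogonal σ Γ) : ∑ i, μ i • w i = 0 := by
  obtain ⟨ζ, hζ, hζμ⟩ := exists_linearIndependent_trace_mul_eq_zero (span K (Set.range μ))
    (d := h + 1) ((Nat.add_le_add_right (finrank_range_le_card μ) _).trans hcard)
  refine eq_zero_of_mem_orthogonal_of_trace_eq_zero hσ (hU.smulSum_surjective hspan hhQ hζ hdim)
    hv fun i x hx => hζμ i _ ?_
  rw [map_sum]
  refine sum_mem fun j _ => ?_
  obtain ⟨c, hc⟩ := hσW x hx (w j) (hwW j)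
  rw [map_smul, ← hc, smul_eq_mul, mul_comm, ← Algebra.smul_def]
  exact smul_mem _ c (subset_span ⟨j, rfl⟩)

theorem linearIndependent_mkQ_orthogonal (hσ : σ.SeparatingRight)
    (hσW : ∀ x ∈ W, ∀ y ∈ W, σ x y ∈ (algebraMap K L).range) (hWsub : IsSubgeometry L W)
    (hU : IsScattered L (W.map (Γ.mkQ.restrictScalars K)) h)
    (hspan : span L (W.map (Γ.mkQ.restrictScalars K) : Set (V ⧸ Γ)) = ⊤)
    (hhQ : h ≤ finrank L (V ⧸ Γ))
    (hdim : (h + 1) * finrank K (W.map (Γ.mkQ.restrictScalars K)) = finrank K (V ⧸ Γ))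
    {ι : Type*} [Fintype ι] (hcard : Fintype.card ι + (h + 1) ≤ finrank K L)
    {w : ι → V} (hwW : ∀ i, w i ∈ W) (hw : LinearIndependent K w) :
    LinearIndependent L ((LinearMap.BilinForm.orthogonal σ Γ).mkQ ∘ w) := by
  rw [Fintype.linearIndependent_iff]
  intro μ hμ
  refine Fintype.linearIndependent_iff.1 (hWsub.linearIndependent hwW hw) μ ?_
  refine eq_zero_of_sum_smul_mem_orthogonal hσ hσW hU hspan hhQ hdim hcard μ hwW ?_
  rw [← Submodule.Quotient.mk_eq_zero, ← mkQ_apply, map_sum]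
  simpa only [map_smul, Function.comp_apply] using hμ

end Delsarte

theorem statement12_general {K L Vn : Type*} [Field K] [Field L] [Algebra K L]
    [Fintype L]
    [AddCommGroup Vn] [Module K Vn] [Module L Vn] [IsScalarTower K L Vn]
    [FiniteDimensional L Vn]
    (m n k h : ℕ) (hhk : h ≤ k)
    (hm2 : h + 2 ≤ m)
    -- `n = km/(h+1)`, i.e. `h+1` divides `km`
    (hn : n * (h + 1) = k * m) (hkn : k < n)
    (hmL : Module.finrank K L = m) (hVn : Module.finrank L Vn = n)
    (W : Submodule K Vn) (hW : Module.finrank K ↥W = n)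
    (hWstar : Module.finrank L ↥(Submodule.span L (W : Set Vn)) = n)
    (σ : Vn →ₗ[L] Vn →ₗ[L] L)
    (hσnd : LinearMap.BilinForm.Nondegenerate σ)
    (hσW : ∀ x ∈ W, ∀ y ∈ W, σ x y ∈ (algebraMap K L).range)
    (Γ : Submodule L Vn) (hΓ : Module.finrank L ↥Γ = n - k)
    (U : Submodule K (Vn ⧸ Γ)) (hU : U = Submodule.map (Γ.mkQ.restrictScalars K) W)
    -- `U` is a maximum `h`-scattered subspace of `𝕍(k,q^m)`
    (hUspan : Submodule.span L (U : Set (Vn ⧸ Γ)) = ⊤)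
    (hUdim : Module.finrank K ↥U = n)
    (hscat : ∀ T : Submodule L (Vn ⧸ Γ), Module.finrank L ↥T = h → wt U T ≤ h)
    (Ud : Submodule K (Vn ⧸ LinearMap.BilinForm.orthogonal σ Γ))
    (hUd : Ud = Submodule.map ((LinearMap.BilinForm.orthogonal σ Γ).mkQ.restrictScalars K) W) :
    -- `U^d` is a maximum `(m−h−2)`-scattered subspace of `𝕍(n−k, q^m)`
    Module.finrank L (Vn ⧸ LinearMap.BilinForm.orthogonal σ Γ) = n - k ∧
    Submodule.span L (Ud : Set (Vn ⧸ LinearMap.BilinForm.orthogonal σ Γ)) = ⊤ ∧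
    Module.finrank K ↥Ud = n ∧
    (∀ T : Submodule L (Vn ⧸ LinearMap.BilinForm.orthogonal σ Γ),
      Module.finrank L ↥T = m - h - 2 → wt Ud T ≤ m - h - 2) := by
  subst hU hUd
  set Γ' := LinearMap.BilinForm.orthogonal σ Γ
  have hΓ' : finrank L Γ' = k := by
    rw [LinearMap.BilinForm.finrank_orthogonal hσnd, hVn, hΓ]
    omega
  have hQ : finrank L (Vn ⧸ Γ) = k := by
    have := Γ.finrank_quotient_add_finrank
    omega
  have hdim : (h + 1) * finrank K (W.map (Γ.mkQ.restrictScalars K)) = finrank K (Vn ⧸ Γ) := by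
    rw [hUdim, ← Module.finrank_mul_finrank K L, hmL, hQ]
    linarith
  have hWsub : IsSubgeometry L W := hW.trans hWstar.symm
  refine ⟨by have := Γ'.finrank_quotient_add_finrank; omega, ?_, ?_, ?_⟩
  · rw [map_coe, LinearMap.coe_restrictScalars, span_image,
      eq_top_of_finrank_eq (hWstar.trans hVn.symm), Submodule.map_top, range_mkQ]
  · rw [← hW, ← LinearMap.range_domRestrict, LinearMap.finrank_range_of_inj
      (LinearMap.injective_domRestrict_iff.2 (disjoint_def.2 fun x hxW hx => ?_))]
    simpa using eq_zero_of_sum_smul_mem_orthogonal hσnd.2 hσW hscat hUspan (hQ ▸ hhk) hdim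
      (ι := Fin 1) (by rw [Fintype.card_fin]; omega) (fun _ => 1) (fun _ => hxW)
      (by rw [Fin.sum_univ_one, one_smul]; exact (Submodule.Quotient.mk_eq_zero _).1 hx)
  · exact isScattered_map_of_linearIndependent_comp _ fun w hwW hw =>
      linearIndependent_mkQ_orthogonal hσnd.2 hσW hWsub hscat hUspan (hQ ▸ hhk) hdim
        (by rw [Fintype.card_fin]; omega) hwW hw

/-- Corollary 1.36: the Delsarte dual of a maximum `h`-scattered subspace of
`𝕍(k,q^m)` (of dimension `n = km/(h+1)`, with `m ≥ h+2`) is a maximum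
`(m−h−2)`-scattered subspace of `𝕍(km/(h+1) − k, q^m)`. -/
theorem statement12 {K L Vn : Type*} [Field K] [Field L] [Algebra K L]
    [Fintype K] [Fintype L]
    [AddCommGroup Vn] [Module K Vn] [Module L Vn] [IsScalarTower K L Vn]
    [FiniteDimensional L Vn]
    (m n k h : ℕ) (hm : 0 < m) (hk : 0 < k) (hh1 : 1 ≤ h) (hhk : h ≤ k)
    (hm2 : h + 2 ≤ m)
    -- `n = km/(h+1)`, i.e. `h+1` divides `km`
    (hn : n * (h + 1) = k * m) (hkn : k < n)
    (hmL : Module.finrank K L = m) (hVn : Module.finrank L Vn = n)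
    (W : Submodule K Vn) (hW : Module.finrank K ↥W = n)
    (hWstar : Module.finrank L ↥(Submodule.span L (W : Set Vn)) = n)
    (σ : Vn →ₗ[L] Vn →ₗ[L] L)
    (hσnd : LinearMap.BilinForm.Nondegenerate σ)
    (hσrefl : LinearMap.IsRefl σ)
    (hσW : ∀ x ∈ W, ∀ y ∈ W, σ x y ∈ (algebraMap K L).range)
    (hσ'nd : ∀ x ∈ W, (∀ y ∈ W, σ x y = 0) → x = 0)
    (Γ : Submodule L Vn) (hΓ : Module.finrank L ↥Γ = n - k)
    (hΓW : Γ.restrictScalars K ⊓ W = ⊥)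
    (U : Submodule K (Vn ⧸ Γ)) (hU : U = Submodule.map (Γ.mkQ.restrictScalars K) W)
    -- `U` is a maximum `h`-scattered subspace of `𝕍(k,q^m)`
    (hUspan : Submodule.span L (U : Set (Vn ⧸ Γ)) = ⊤)
    (hUdim : Module.finrank K ↥U = n)
    (hscat : ∀ T : Submodule L (Vn ⧸ Γ), Module.finrank L ↥T = h → wt U T ≤ h)
    (Ud : Submodule K (Vn ⧸ LinearMap.BilinForm.orthogonal σ Γ))
    (hUd : Ud = Submodule.map ((LinearMap.BilinForm.orthogonal σ Γ).mkQ.restrictScalars K) W) :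
    -- `U^d` is a maximum `(m−h−2)`-scattered subspace of `𝕍(n−k, q^m)`
    Module.finrank L (Vn ⧸ LinearMap.BilinForm.orthogonal σ Γ) = n - k ∧
    Submodule.span L (Ud : Set (Vn ⧸ LinearMap.BilinForm.orthogonal σ Γ)) = ⊤ ∧
    Module.finrank K ↥Ud = n ∧
    (∀ T : Submodule L (Vn ⧸ LinearMap.BilinForm.orthogonal σ Γ),
      Module.finrank L ↥T = m - h - 2 → wt Ud T ≤ m - h - 2) :=
  statement12_general m n k h hhk hm2 hn hkn hmL hVn W hW hWstar σ hσnd hσW Γ hΓ U hU hUspan hUdim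
    hscat Ud hUd
end

section
/- Let C be a non-degenerate [n,k]_{q^m/q} code such that C^⊥ is non-degenerate. Let G be any generator matrix of C and let U_C be the 𝔽_q-span of the columns of G. Then the map φ : 𝔽_{q^m}^n/C^⊥ → 𝔽_{q^m}^k sending x + C^⊥ to xG^⊤ is a well-defined 𝔽_{q^m}-linear isomorphism, and φ maps the 𝔽_q-subspace (𝔽_q^n + C^⊥)/C^⊥ onto U_C. -/
/-- The standard dot-product bilinear form on `ι → L`. -/
noncomputable def dotForm (L : Type*) [Field L] (ι : Type*) [Fintype ι] :
    (ι → L) →ₗ[L] (ι → L) →ₗ[L] L :=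
  LinearMap.mk₂ L (fun x y => ∑ i, x i * y i)
    (fun x x' y => by simp [add_mul, Finset.sum_add_distrib])
    (fun c x y => by simp [Finset.mul_sum, mul_assoc])
    (fun x y y' => by simp [mul_add, Finset.sum_add_distrib])
    (fun c x y => by simp [Finset.mul_sum, mul_left_comm])

/-- The rank weight of a vector `v ∈ 𝔽_{q^m}^ι`. -/
noncomputable def rankWt (K : Type*) {L ι : Type*} [Field K] [Field L] [Algebra K L]
    (v : ι → L) : ℕ :=
  Module.finrank K ↥(Submodule.span K (Set.range v))

/-! The map `x ↦ G x` kills exactly `C^⊥`, because `(y G) · x = y · (G x)`, and it is onto since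
`G` has rank `k`. A vector of `𝔽_q^n` is an `𝔽_q`-combination of standard basis vectors, which
`G` sends to its columns, so `𝔽_q^n` is mapped onto their `𝔽_q`-span `U_C`. -/

open Matrix

section
variable {L : Type*} [Field L] {κ ι : Type*} [Fintype κ] [Fintype ι]

theorem dotForm_apply (x y : ι → L) : dotForm L ι x y = x ⬝ᵥ y := rfl

theorem ker_mulVecLin_eq_orthogonal_range_vecMulLinear (G : Matrix κ ι L) :
    LinearMap.ker G.mulVecLin =
      LinearMap.BilinForm.orthogonal (dotForm L ι) (LinearMap.range G.vecMulLinear) := by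
  ext x
  simp only [LinearMap.mem_ker, mulVecLin_apply, LinearMap.BilinForm.mem_orthogonal_iff,
    LinearMap.mem_range, forall_exists_index, forall_apply_eq_imp_iff, vecMulLinear_apply,
    dotForm_apply, ← dotProduct_mulVec]
  exact dotProduct_eq_zero_iff.symm.trans (by simp_rw [dotProduct_comm])

theorem surjective_mulVecLin_of_finrank_range_vecMulLinear (G : Matrix κ ι L)
    (hG : Module.finrank L (LinearMap.range G.vecMulLinear) = Fintype.card κ) :
    Function.Surjective G.mulVecLin := by
  refine LinearMap.range_eq_top.mp (Submodule.eq_top_of_finrank_eq ?_)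
  rw [Module.finrank_fintype_fun_eq_card, ← hG, ← mulVecLin_transpose, ← rank, ← rank,
    rank_transpose]

end

theorem exists_quotEquiv_of_ker_eq {R M N : Type*} [Ring R] [AddCommGroup M] [AddCommGroup N]
    [Module R M] [Module R N] {f : M →ₗ[R] N} (hf : Function.Surjective f) {p : Submodule R M}
    (hp : LinearMap.ker f = p) :
    ∃ φ : (M ⧸ p) ≃ₗ[R] N, ∀ x, φ (Submodule.Quotient.mk x) = f x :=
  ⟨(p.quotEquivOfEq _ hp.symm).trans (f.quotKerEquivOfSurjective hf), fun _ => rfl⟩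

theorem map_mulVecLin_pi_range_algebraMap {K L : Type*} [Field K] [Field L] [Algebra K L]
    {κ ι : Type*} [Fintype ι] (G : Matrix κ ι L) :
    Submodule.map (G.mulVecLin.restrictScalars K)
        (Submodule.pi Set.univ fun _ : ι => LinearMap.range (Algebra.linearMap K L)) =
      Submodule.span K (Set.range fun j i => G i j) := by
  have hcomp : G.mulVecLin.restrictScalars K ∘ₗ (Algebra.linearMap K L).compLeft ι =
      Fintype.linearCombination K fun j i => G i j := by
    ext z i
    simp [mulVec, dotProduct, Fintype.linearCombination_apply, Algebra.smul_def, mul_comm]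
  rw [← LinearMap.range_compLeft, ← LinearMap.range_comp, hcomp, Fintype.range_linearCombination]

theorem statement15_general {K L : Type*} [Field K] [Field L] [Algebra K L]
    (n k : ℕ)
    -- `C` is an `[n,k]_{q^m/q}` code with generator matrix `G`
    (C : Submodule L (Fin n → L)) (hCdim : Module.finrank L ↥C = k)
    (G : Matrix (Fin k) (Fin n) L)
    (hG : LinearMap.range (Matrix.vecMulLinear G) = C)
    -- the dual code `C^⊥`
    (Cperp : Submodule L (Fin n → L))
    (hCperp : Cperp = LinearMap.BilinForm.orthogonal (dotForm L (Fin n)) C)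
    -- the associated system: the `𝔽_q`-span of the columns of `G`
    (UC : Submodule K (Fin k → L))
    (hUC : UC = Submodule.span K (Set.range (fun j : Fin n => fun i : Fin k => G i j)))
    -- `𝔽_q^n`: the vectors of `𝔽_{q^m}^n` with all coordinates in `𝔽_q`
    (Fqn : Submodule K (Fin n → L))
    (hFqn : Fqn = Submodule.pi Set.univ (fun _ : Fin n => LinearMap.range (Algebra.linearMap K L))) :
    ∃ φ : ((Fin n → L) ⧸ Cperp) ≃ₗ[L] (Fin k → L),
      (∀ x : Fin n → L, φ (Submodule.Quotient.mk x) = Matrix.mulVec G x) ∧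
      Submodule.map (φ.toLinearMap.restrictScalars K)
        (Submodule.map (Cperp.mkQ.restrictScalars K) Fqn) = UC := by
  subst hCperp hUC hFqn hG
  have hsurj := surjective_mulVecLin_of_finrank_range_vecMulLinear G (by simpa using hCdim)
  obtain ⟨φ, hφ⟩ := exists_quotEquiv_of_ker_eq hsurj
    (ker_mulVecLin_eq_orthogonal_range_vecMulLinear G)
  refine ⟨φ, hφ, ?_⟩
  rw [← Submodule.map_comp, ← map_mulVecLin_pi_range_algebraMap]
  congr 1
  exact LinearMap.ext hφ

/-- Theorem 2.10: identification of the system `U_C` with `(𝔽_q^n + C^⊥)/C^⊥`. -/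
theorem statement15 {K L : Type*} [Field K] [Field L] [Algebra K L]
    [Fintype K] [Fintype L]
    (m n k : ℕ) (hm : 0 < m) (hmL : Module.finrank K L = m)
    (hk : 0 < k) (hkn : k ≤ n)
    -- `C` is an `[n,k]_{q^m/q}` code with generator matrix `G`
    (C : Submodule L (Fin n → L)) (hCdim : Module.finrank L ↥C = k)
    (G : Matrix (Fin k) (Fin n) L)
    (hG : LinearMap.range (Matrix.vecMulLinear G) = C)
    -- the dual code `C^⊥`
    (Cperp : Submodule L (Fin n → L))
    (hCperp : Cperp = LinearMap.BilinForm.orthogonal (dotForm L (Fin n)) C)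
    -- `C` is non-degenerate: the columns of `G` are `𝔽_q`-linearly independent
    (hCnd : LinearIndependent K (fun j : Fin n => fun i : Fin k => G i j))
    -- `C^⊥` is non-degenerate
    (hCperpnd : ∀ z : Fin n → K,
      (∀ c ∈ Cperp, ∑ i, algebraMap K L (z i) * c i = 0) → z = 0)
    -- the associated system: the `𝔽_q`-span of the columns of `G`
    (UC : Submodule K (Fin k → L))
    (hUC : UC = Submodule.span K (Set.range (fun j : Fin n => fun i : Fin k => G i j)))
    -- `𝔽_q^n`: the vectors of `𝔽_{q^m}^n` with all coordinates in `𝔽_q`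
    (Fqn : Submodule K (Fin n → L))
    (hFqn : Fqn = Submodule.pi Set.univ (fun _ : Fin n => LinearMap.range (Algebra.linearMap K L))) :
    ∃ φ : ((Fin n → L) ⧸ Cperp) ≃ₗ[L] (Fin k → L),
      (∀ x : Fin n → L, φ (Submodule.Quotient.mk x) = Matrix.mulVec G x) ∧
      Submodule.map (φ.toLinearMap.restrictScalars K)
        (Submodule.map (Cperp.mkQ.restrictScalars K) Fqn) = UC :=
  statement15_general n k C hCdim G hG Cperp hCperp UC hUC Fqn hFqn
end
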